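/- For every type σ, both Enum_σ and Rep_σ hold: (i) for every variable x : σ the formula ⋁_{a∈Bσ} (↓σ a) ≐σ x is deducible, and (ii) for all finite sets A of formulas, all terms s, t : σ and every context C admissible for A, if A ⊢ s ≐σ t and A ⊢ C[s] then A ⊢ C[t]. Consequently (Deductive Completeness), every valid formula is deducible. -/

import Mathlib

namespace PTT


/-- Simple types over a single base type `B`. -/
inductive Ty : Type
  | base : Ty
  | arrow : Ty → Ty → Ty
deriving DecidableEq

/-- Names: the constants `⊥` and `→`, and variables (an index together with a type). -/
inductive Name : Type
  | bot : Name
  | imp : Name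
  | var : ℕ → Ty → Name
deriving DecidableEq

/-- The type of a name. -/
def Name.ty : Name → Ty
  | .bot => .base
  | .imp => .arrow .base (.arrow .base .base)
  | .var _ σ => σ

/-- Terms: names, abstraction over a variable, application. -/
inductive Tm : Type
  | name : Name → Tm
  | lam : ℕ → Ty → Tm → Tm
  | app : Tm → Tm → Tm
deriving DecidableEq

/-- The term `⊥`. -/
def botTm : Tm := .name .bot

/-- The variable `(n, σ)` as a term. -/
def vr (n : ℕ) (σ : Ty) : Tm := .name (.var n σ)

/-- Implication `s → t`. -/
def impTm (s t : Tm) : Tm := .app (.app (.name .imp) s) t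

/-- `⊤ := ⊥ → ⊥`. -/
def topTm : Tm := impTm botTm botTm

/-- `¬ s := s → ⊥`. -/
def negTm (s : Tm) : Tm := impTm s botTm

/-- `s ∨ t := (s → t) → t`. -/
def orTm (s t : Tm) : Tm := impTm (impTm s t) t

/-- `s ∧ t := ¬(¬s ∨ ¬t)`. -/
def andTm (s t : Tm) : Tm := negTm (orTm (negTm s) (negTm t))

/-- `s ≡ t := (s → t) ∧ (t → s)`. -/
def equivTm (s t : Tm) : Tm := andTm (impTm s t) (impTm t s)

/-- The typing relation. -/
inductive HasTy : Tm → Ty → Prop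
  | name (x : Name) : HasTy (.name x) x.ty
  | lam {n σ s τ} : HasTy s τ → HasTy (.lam n σ s) (.arrow σ τ)
  | app {s t σ τ} : HasTy s (.arrow σ τ) → HasTy t σ → HasTy (.app s t) τ

/-- Free variables of a term. -/
def fv : Tm → Finset (ℕ × Ty)
  | .name (.var n σ) => {(n, σ)}
  | .name _ => ∅
  | .lam n σ s => (fv s).erase (n, σ)
  | .app s t => fv s ∪ fv t

/-- A term is closed if it has no free variables. -/
def Closed (s : Tm) : Prop := fv s = ∅

/-- Capture-free parallel substitution (bound variables are renamed). -/
def substAux (ρ : ℕ × Ty → Tm) : Tm → Tm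
  | .name (.var n σ) => ρ (n, σ)
  | .name x => .name x
  | .app s t => .app (substAux ρ s) (substAux ρ t)
  | .lam n σ s =>
      let used : Finset ℕ :=
        ((fv s).erase (n, σ)).biUnion (fun p => (fv (ρ p)).image Prod.fst)
      let m : ℕ := used.sup id + 1
      .lam m σ (substAux (Function.update ρ (n, σ) (vr m σ)) s)

/-- Capture-free substitution `s[(n,σ) := t]`. -/
def subst (s : Tm) (n : ℕ) (σ : Ty) (t : Tm) : Tm :=
  substAux (Function.update (fun p => vr p.1 p.2) (n, σ) t) s

/-- Contexts: terms with exactly one hole (possibly under binders). -/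
inductive Ctx : Type
  | hole : Ctx
  | lam : ℕ → Ty → Ctx → Ctx
  | appL : Ctx → Tm → Ctx
  | appR : Tm → Ctx → Ctx

/-- Filling the hole of a context with a term (capturing is allowed). -/
def Ctx.fill : Ctx → Tm → Tm
  | .hole, s => s
  | .lam n σ C, s => .lam n σ (C.fill s)
  | .appL C t, s => .app (C.fill s) t
  | .appR t C, s => .app t (C.fill s)

/-- `C` captures the variable `p` if the hole of `C` lies below a binder for `p`. -/
def Ctx.captures : Ctx → ℕ × Ty → Prop
  | .hole, _ => False
  | .lam n σ C, p => p = (n, σ) ∨ C.captures p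
  | .appL C _, p => C.captures p
  | .appR _ C, p => C.captures p

/-- `C` is admissible for `A` if it captures no variable free in `A`. -/
def Ctx.Admissible (C : Ctx) (A : Finset Tm) : Prop :=
  ∀ p ∈ A.biUnion fv, ¬ C.captures p

/-- `s` is a subterm of `t`. -/
def Subterm (s t : Tm) : Prop := ∃ C : Ctx, C.fill s = t

/-- β-redexes. -/
def IsBetaRedex : Tm → Prop
  | .app (.lam _ _ _) _ => True
  | _ => False

/-- A term is β-normal if none of its subterms is a β-redex. -/
def BetaNormal (t : Tm) : Prop := ∀ s, Subterm s t → ¬ IsBetaRedex s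

/-- Lambda equivalence: the least equivalence on well-typed terms containing
α-, β-, η-conversion and closed under arbitrary contexts. -/
inductive LamEq : Tm → Tm → Prop
  | refl {s σ} : HasTy s σ → LamEq s s
  | symm {s t} : LamEq s t → LamEq t s
  | trans {s t u} : LamEq s t → LamEq t u → LamEq s u
  | alpha {n m σ s τ} : HasTy (.lam n σ s) τ → (m, σ) ∉ fv s →
      LamEq (.lam n σ s) (.lam m σ (subst s n σ (vr m σ)))
  | beta {n σ s t τ} : HasTy (.app (.lam n σ s) t) τ →
      LamEq (.app (.lam n σ s) t) (subst s n σ t)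
  | eta {n σ s τ} : HasTy (.lam n σ (.app s (vr n σ))) τ → (n, σ) ∉ fv s →
      LamEq (.lam n σ (.app s (vr n σ))) s
  | ctx {s t σ} (C : Ctx) : LamEq s t → HasTy (C.fill s) σ → LamEq (C.fill s) (C.fill t)

/-- The standard set-theoretic interpretation of types: `B` is interpreted as the
two truth values (`Bool`), functional types as full function spaces. -/
def Ty.sem : Ty → Type
  | .base => Bool
  | .arrow σ τ => σ.sem → τ.sem

def Ty.semDefault : (σ : Ty) → σ.sem
  | .base => false
  | .arrow _ τ => fun _ => τ.semDefault

instance (σ : Ty) : Inhabited σ.sem := ⟨σ.semDefault⟩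

noncomputable instance Ty.semFintype : (σ : Ty) → Fintype σ.sem
  | .base => inferInstanceAs (Fintype Bool)
  | .arrow σ τ =>
      letI := Ty.semFintype σ
      letI := Ty.semFintype τ
      letI := Classical.decEq σ.sem
      inferInstanceAs (Fintype (σ.sem → τ.sem))

def Ty.semCast {σ τ : Ty} (h : σ = τ) (v : σ.sem) : τ.sem := h ▸ v

/-- An interpretation assigns to every variable a value of the corresponding type
(the constants `⊥` and `→` have their values fixed). -/
def Interp : Type := ℕ → (σ : Ty) → σ.sem

def Interp.update (I : Interp) (n : ℕ) (σ : Ty) (v : σ.sem) : Interp :=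
  fun m τ => if h : m = n ∧ τ = σ then Ty.semCast h.2.symm v else I m τ

/-- Type inference. -/
def typeOf : Tm → Option Ty
  | .name x => some x.ty
  | .lam _ σ s => (typeOf s).map (Ty.arrow σ)
  | .app s t =>
      match typeOf s, typeOf t with
      | some (.arrow σ τ), some σ' => if σ = σ' then some τ else none
      | _, _ => none

/-- The canonical extension `Î` of an interpretation to all terms: `eval I s σ`
is the value of `s` at type `σ` (on well-typed terms this is the usual
denotation; junk default values are used at type mismatches). -/
def eval (I : Interp) : Tm → (σ : Ty) → σ.sem
  | .name (.var n τ), σ => if h : τ = σ then Ty.semCast h (I n τ) else default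
  | .name .bot, σ =>
      match σ with
      | .base => false
      | _ => default
  | .name .imp, σ =>
      match σ with
      | .arrow .base (.arrow .base .base) => fun a b => !a || b
      | _ => default
  | .app s t, σ =>
      match typeOf t with
      | some τ => eval I s (.arrow τ σ) (eval I t τ)
      | none => default
  | .lam n τ s, σ =>
      match σ with
      | .base => default
      | .arrow σ₁ σ₂ =>
          if h : σ₁ = τ then
            fun a => eval (I.update n τ (Ty.semCast h a)) s σ₂
          else default

/-- `I` satisfies the formula `s` if `Î s = 1`. -/
def Satisfies (I : Interp) (s : Tm) : Prop := eval I s .base = true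

/-- A formula is valid if every interpretation satisfies it. -/
def ValidFml (s : Tm) : Prop := ∀ I : Interp, Satisfies I s

/-- A sequent `A ⇒ s` is valid if every interpretation satisfying `A` satisfies `s`. -/
def ValidSeq (A : Finset Tm) (s : Tm) : Prop :=
  ∀ I : Interp, (∀ t ∈ A, Satisfies I t) → Satisfies I s

/-- Finite disjunction (the empty disjunction is `⊥`). -/
def orList : List Tm → Tm
  | [] => botTm
  | [s] => s
  | s :: l => orTm s (orList l)

/-- Finite conjunction (the empty conjunction is `⊤`). -/
def andList : List Tm → Tm
  | [] => topTm
  | [s] => s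
  | s :: l => andTm s (andList l)

/-- The argument types of a type (every type has the form `σ₁…σₙB`). -/
def Ty.args : Ty → List Ty
  | .base => []
  | .arrow σ τ => σ :: τ.args

/-- Tuples of values along a list of types. -/
def Tup : List Ty → Type
  | [] => PUnit
  | σ :: l => σ.sem × Tup l

noncomputable instance TupFintype : (l : List Ty) → Fintype (Tup l)
  | [] => inferInstanceAs (Fintype PUnit)
  | σ :: l =>
      letI := TupFintype l
      inferInstanceAs (Fintype (σ.sem × Tup l))

/-- Applying a function value to a tuple of arguments (the result type is `B`). -/
def Ty.applyTup : (σ : Ty) → σ.sem → Tup σ.args → Bool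
  | .base, a, _ => a
  | .arrow _ τ, f, p => τ.applyTup (f p.1) p.2

/-- Quote/identity data for each type in a list: a quote function and the term `≐`. -/
def ArgData : List Ty → Type
  | [] => PUnit
  | σ :: l => ((σ.sem → Tm) × Tm) × ArgData l

/-- The conjunction list `x_k ≐_{σ_k} (↓_{σ_k} b_k), …` for a tuple `b`. -/
def eqConj : (l : List Ty) → ArgData l → ℕ → Tup l → List Tm
  | [], _, _, _ => []
  | σ :: l, (d, ds), k, (b, bs) =>
      (.app (.app d.2 (vr k σ)) (d.1 b)) :: eqConj l ds (k + 1) bs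

/-- `λ x_k : σ_k. …` binding one variable for each type in the list. -/
def mkLams : (l : List Ty) → ℕ → Tm → Tm
  | [], _, body => body
  | σ :: l, k, body => .lam k σ (mkLams l (k + 1) body)

/-- The body of the quote term
`↓_{σ₁…σₙB} a := λx₁…xₙ. ⋁_{b₁…bₙ, a b₁…bₙ = 1} ⋀_j x_j ≐_{σ_j} (↓_{σ_j} b_j)`. -/
noncomputable def quoteBodyAux (σ : Ty) (ad : ArgData σ.args) (a : σ.sem) : Tm :=
  mkLams σ.args 0 (orList
    ((((Finset.univ : Finset (Tup σ.args)).toList.filter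
        (fun b => σ.applyTup a b))).map
      (fun b => andList (eqConj σ.args ad 0 b))))

/-- `∀σ := λf. ⋀_{a ∈ Bσ} f (↓σ a)`, given the quote function for `σ`. -/
noncomputable def allTmAux (σ : Ty) (q : σ.sem → Tm) : Tm :=
  .lam 0 (.arrow σ .base)
    (andList (((Finset.univ : Finset σ.sem).toList).map
      (fun a => .app (vr 0 (.arrow σ .base)) (q a))))

mutual
  /-- The quote function `↓σ` together with the identity term `≐σ`. -/
  noncomputable def quoteEq : (σ : Ty) → ((σ.sem → Tm) × Tm)
    | .base =>
        (fun a => quoteBodyAux .base PUnit.unit a,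
         .lam 0 .base (.lam 1 .base (equivTm (vr 0 .base) (vr 1 .base))))
    | .arrow σ τ =>
        (fun a => quoteBodyAux (.arrow σ τ) ((quoteEq σ, argData τ) : ArgData (σ :: τ.args)) a,
         .lam 0 (.arrow σ τ) (.lam 1 (.arrow σ τ)
           (.app (allTmAux σ (quoteEq σ).1)
             (.lam 2 σ
               (.app (.app (quoteEq τ).2
                  (.app (vr 0 (.arrow σ τ)) (vr 2 σ)))
                (.app (vr 1 (.arrow σ τ)) (vr 2 σ)))))))
  /-- Quote/identity data for all argument types of a type. -/
  noncomputable def argData : (σ : Ty) → ArgData σ.args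
    | .base => PUnit.unit
    | .arrow σ τ => ((quoteEq σ, argData τ) : ArgData (σ :: τ.args))
end

/-- The quote function `↓σ : Bσ → Λ`. -/
noncomputable def quote (σ : Ty) (a : σ.sem) : Tm := (quoteEq σ).1 a

/-- The term `≐σ : σσB` denoting the identity predicate on `Bσ`. -/
noncomputable def eqTm (σ : Ty) : Tm := (quoteEq σ).2

/-- The term `∀σ : (σB)B`. -/
noncomputable def allTm (σ : Ty) : Tm := allTmAux σ (quote σ)


/-- Propositional formulas: `s ::= x | ⊥ | s → s` with `x` a variable of type `B`. -/
inductive Propositional : Tm → Prop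
  | var (n : ℕ) : Propositional (vr n .base)
  | bot : Propositional botTm
  | imp {s t} : Propositional s → Propositional t → Propositional (impTm s t)

/-- A type-respecting substitution of terms for variables. -/
def IsSubstitution (ρ : ℕ × Ty → Tm) : Prop := ∀ n σ, HasTy (ρ (n, σ)) σ

/-- A formula is tautologous if it is a substitution instance of a tautology
(a valid propositional formula). -/
def Tautologous (s : Tm) : Prop :=
  ∃ t ρ, Propositional t ∧ ValidFml t ∧ IsSubstitution ρ ∧ s = substAux ρ t

/-- The proof system: Triv, Weak, Ded, MP, DN, Lam and Boolean replacement (BR).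
Sequents consist of a finite set of formulas and a formula. -/
inductive Ded : Finset Tm → Tm → Prop
  | triv {A s} : (∀ t ∈ A, HasTy t .base) → HasTy s .base → Ded (insert s A) s
  | weak {A s t} : HasTy s .base → Ded A t → Ded (insert s A) t
  | ded {A s t} : Ded (insert s A) t → Ded A (impTm s t)
  | mp {A s t} : Ded A (impTm s t) → Ded A s → Ded A t
  | dn {A s} : Ded A (negTm (negTm s)) → Ded A s
  | lam {A s t} : Ded A s → LamEq s t → HasTy t .base → Ded A t
  | br {A s t} (C : Ctx) : C.Admissible A → Ded A (equivTm s t) →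
      Ded A (C.fill s) → HasTy (C.fill t) .base → Ded A (C.fill t)


/-- `Enum_σ`: for every variable `x : σ`, `⊢ ⋁_{a ∈ Bσ} (↓σ a) ≐σ x`. -/
def EnumP (σ : Ty) : Prop :=
  ∀ n : ℕ, Ded ∅ (orList (((Finset.univ : Finset σ.sem).toList).map
    (fun a => Tm.app (Tm.app (eqTm σ) (quote σ a)) (vr n σ))))

/-- `Rep_σ`: replacement with respect to equations `s ≐σ t` in contexts admissible
for the assumptions. -/
def RepP (σ : Ty) : Prop :=
  ∀ (A : Finset Tm) (s t : Tm) (C : Ctx), (∀ u ∈ A, HasTy u .base) →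
    HasTy s σ → HasTy t σ → C.Admissible A →
    Ded A (Tm.app (Tm.app (eqTm σ) s) t) → Ded A (C.fill s) → Ded A (C.fill t)

/-!
Every value `a ∈ Bσ` has a closed quote `↓a`, and `≐σ` is built from `∀` and `≡` so that
`u ≐σ v` is λ-equivalent to the conjunction of `u ↓c ≡ v ↓c` over all argument tuples `c`.
Since `↓g ↓c` β-reduces to a disjunction of conjunctions of equations between quotes, an
induction over argument types shows that `↓g ↓c` is deducible or refutable according to the
value `g c`, and that distinct values have provably distinct quotes.

`Rep` and `Enum` are proved together by induction on types. Replacement at `σ → τ` η-expands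
`s` and `t` with a fresh variable `x`, derives `s x ≐τ t x` by case analysis on `x` with
`Enum_σ`, and replaces under the binder with `Rep_τ`. `Enum_{σ→τ}` for `s` builds the graph of
`s` one argument at a time with `Enum_τ`.

For completeness, fix an interpretation `I`. Under the assumptions `↓(I x) ≐ x` for the free
variables `x` of `s`, induction on `s` gives `↓(Î s) ≐ s`; if `s` is valid this reads `⊤ ≐ s`,
hence `s`, and case analysis with `Enum` on each free variable discharges the assumptions.
-/

/-! ### Typing and substitution -/

def idSub : ℕ × Ty → Tm := fun p => vr p.1 p.2

def Tm.size : Tm → ℕ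
  | .name _ => 1
  | .lam _ _ s => s.size + 1
  | .app s t => s.size + t.size + 1

theorem hasTy_vr {n : ℕ} {σ : Ty} : HasTy (vr n σ) σ := HasTy.name (.var n σ)

theorem HasTy.unique {s : Tm} {σ τ : Ty} (h₁ : HasTy s σ) (h₂ : HasTy s τ) : σ = τ := by
  induction h₁ generalizing τ with
  | name x => cases h₂; rfl
  | lam _ ih => cases h₂ with | lam hb => rw [ih hb]
  | app _ _ ihs _ => cases h₂ with | app hs _ => injection ihs hs

theorem HasTy.typeOf_eq {s : Tm} {σ : Ty} (h : HasTy s σ) : typeOf s = some σ := by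
  induction h with
  | name x => rfl
  | lam _ ih => simp [typeOf, ih]
  | app _ _ ihs iht => simp [typeOf, ihs, iht]

theorem isSubstitution_idSub : IsSubstitution idSub := fun _ _ => hasTy_vr

theorem IsSubstitution.update {ρ : ℕ × Ty → Tm} (hρ : IsSubstitution ρ) {n : ℕ} {σ : Ty}
    {u : Tm} (hu : HasTy u σ) : IsSubstitution (Function.update ρ (n, σ) u) := by
  intro m τ
  by_cases h : (m, τ) = (n, σ)
  · rw [h, Function.update_self]; cases h; exact hu
  · rw [Function.update_of_ne h]; exact hρ m τ

@[simp] theorem fv_vr {n : ℕ} {σ : Ty} : fv (vr n σ) = {(n, σ)} := rfl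
@[simp] theorem fv_name_var {n : ℕ} {σ : Ty} : fv (.name (.var n σ)) = {(n, σ)} := rfl
@[simp] theorem fv_bot : fv botTm = ∅ := rfl
@[simp] theorem fv_name_imp : fv (.name .imp) = ∅ := rfl
@[simp] theorem fv_app {s t : Tm} : fv (.app s t) = fv s ∪ fv t := rfl
@[simp] theorem fv_lam {n : ℕ} {σ : Ty} {s : Tm} : fv (.lam n σ s) = (fv s).erase (n, σ) := rfl
@[simp] theorem fv_imp {s t : Tm} : fv (impTm s t) = fv s ∪ fv t := by simp [impTm]
@[simp] theorem fv_neg {s : Tm} : fv (negTm s) = fv s := by simp [negTm]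
@[simp] theorem fv_or {s t : Tm} : fv (orTm s t) = fv s ∪ fv t := by
  simp [orTm, Finset.union_comm]
@[simp] theorem fv_and {s t : Tm} : fv (andTm s t) = fv s ∪ fv t := by simp [andTm]

/-- The index of the variable that `substAux ρ` uses to rename the binder of `λ (n, σ). s`. -/
def freshIdx (ρ : ℕ × Ty → Tm) (n : ℕ) (σ : Ty) (s : Tm) : ℕ :=
  (((fv s).erase (n, σ)).biUnion (fun p => (fv (ρ p)).image Prod.fst)).sup id + 1

@[simp] theorem substAux_vr {ρ : ℕ × Ty → Tm} {n : ℕ} {σ : Ty} :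
    substAux ρ (vr n σ) = ρ (n, σ) := rfl
@[simp] theorem substAux_app {ρ : ℕ × Ty → Tm} {s t : Tm} :
    substAux ρ (.app s t) = .app (substAux ρ s) (substAux ρ t) := rfl
theorem substAux_lam {ρ : ℕ × Ty → Tm} {n : ℕ} {σ : Ty} {s : Tm} :
    substAux ρ (.lam n σ s) =
      .lam (freshIdx ρ n σ s) σ
        (substAux (Function.update ρ (n, σ) (vr (freshIdx ρ n σ s) σ)) s) := rfl
@[simp] theorem substAux_or {ρ : ℕ × Ty → Tm} {s t : Tm} :
    substAux ρ (orTm s t) = orTm (substAux ρ s) (substAux ρ t) := rfl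
@[simp] theorem substAux_and {ρ : ℕ × Ty → Tm} {s t : Tm} :
    substAux ρ (andTm s t) = andTm (substAux ρ s) (substAux ρ t) := rfl
@[simp] theorem substAux_equiv {ρ : ℕ × Ty → Tm} {s t : Tm} :
    substAux ρ (equivTm s t) = equivTm (substAux ρ s) (substAux ρ t) := rfl

theorem freshIdx_ne {ρ : ℕ × Ty → Tm} {n : ℕ} {σ : Ty} {s : Tm} {p : ℕ × Ty}
    (hp : p ∈ (fv s).erase (n, σ)) {q : ℕ × Ty} (hq : q ∈ fv (ρ p)) :
    q.1 ≠ freshIdx ρ n σ s := by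
  have := Finset.le_sup (f := id) (Finset.mem_biUnion.2
    ⟨p, hp, Finset.mem_image_of_mem Prod.fst hq⟩ :
      q.1 ∈ ((fv s).erase (n, σ)).biUnion fun p => (fv (ρ p)).image Prod.fst)
  simp only [id] at this
  simp only [freshIdx]; omega

theorem HasTy.substAux {s : Tm} {σ : Ty} (h : HasTy s σ) {ρ : ℕ × Ty → Tm}
    (hρ : ∀ p ∈ fv s, HasTy (ρ p) p.2) : HasTy (PTT.substAux ρ s) σ := by
  induction h generalizing ρ with
  | name x =>
      cases x with
      | var n σ => exact hρ (n, σ) (by simp)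
      | bot => exact HasTy.name _
      | imp => exact HasTy.name _
  | @lam n σ s τ _ ih =>
      refine HasTy.lam (ih fun p hp => ?_)
      by_cases hpn : p = (n, σ)
      · subst hpn; rw [Function.update_self]; exact hasTy_vr
      · rw [Function.update_of_ne hpn]; exact hρ p (by simp [hp, hpn])
  | app _ _ ihs iht =>
      exact HasTy.app (ihs fun p hp => hρ p (by simp [hp])) (iht fun p hp => hρ p (by simp [hp]))

theorem HasTy.substAux_of_isSubstitution {s : Tm} {σ : Ty} (h : HasTy s σ)
    {ρ : ℕ × Ty → Tm} (hρ : IsSubstitution ρ) : HasTy (PTT.substAux ρ s) σ :=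
  h.substAux fun p _ => hρ p.1 p.2

theorem HasTy.subst {b : Tm} {τ : Ty} (hb : HasTy b τ) {n : ℕ} {σ : Ty} {u : Tm}
    (hu : HasTy u σ) : HasTy (PTT.subst b n σ u) τ :=
  hb.substAux_of_isSubstitution (isSubstitution_idSub.update hu)

theorem size_substAux_of_isVar {s : Tm} {ρ : ℕ × Ty → Tm}
    (h : ∀ p ∈ fv s, ∃ q : ℕ × Ty, ρ p = vr q.1 q.2) : (substAux ρ s).size = s.size := by
  induction s generalizing ρ with
  | name x =>
      cases x with
      | var n σ =>
          obtain ⟨q, hq⟩ := h (n, σ) (by simp)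
          rw [show substAux ρ (.name (.var n σ)) = ρ (n, σ) from rfl, hq]
          rfl
      | bot => rfl
      | imp => rfl
  | app s t ihs iht =>
      simp only [substAux_app, Tm.size]
      rw [ihs fun p hp => h p (by simp [hp]), iht fun p hp => h p (by simp [hp])]
  | lam n σ s ih =>
      rw [substAux_lam]
      simp only [Tm.size]
      rw [ih]
      intro p hp
      by_cases hpn : p = (n, σ)
      · subst hpn; exact ⟨(freshIdx ρ n σ s, σ), by simp⟩
      · rw [Function.update_of_ne hpn]; exact h p (by simp [hp, hpn])

theorem size_subst_vr {s : Tm} {n m : ℕ} {σ : Ty} : (subst s n σ (vr m σ)).size = s.size := by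
  refine size_substAux_of_isVar fun p _ => ?_
  by_cases hp : p = (n, σ)
  · subst hp; exact ⟨(m, σ), by simp⟩
  · exact ⟨p, by simp [Function.update_of_ne hp]⟩

theorem Ctx.exists_hasTy_of_hasTy_fill {C : Ctx} {s : Tm} {τ : Ty} (h : HasTy (C.fill s) τ) :
    ∃ σ, HasTy s σ := by
  induction C generalizing τ with
  | hole => exact ⟨τ, h⟩
  | lam _ _ _ ih => cases h with | lam hb => exact ih hb
  | appL _ _ ih => cases h with | app h₁ _ => exact ih h₁
  | appR _ _ ih => cases h with | app _ h₂ => exact ih h₂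

theorem Ctx.hasTy_fill_of_hasTy_fill {C : Ctx} {s t : Tm} {σ τ : Ty}
    (h : HasTy (C.fill s) τ) (hs : HasTy s σ) (ht : HasTy t σ) : HasTy (C.fill t) τ := by
  induction C generalizing τ with
  | hole => rwa [h.unique hs]
  | lam _ _ _ ih => cases h with | lam hb => exact HasTy.lam (ih hb)
  | appL _ _ ih => cases h with | app h₁ h₂ => exact HasTy.app (ih h₁) h₂
  | appR _ _ ih => cases h with | app h₁ h₂ => exact HasTy.app h₁ (ih h₂)

theorem hasTy_bot : HasTy botTm .base := HasTy.name .bot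

theorem hasTy_imp {s t : Tm} (hs : HasTy s .base) (ht : HasTy t .base) :
    HasTy (impTm s t) .base :=
  HasTy.app (HasTy.app (HasTy.name .imp) hs) ht

theorem hasTy_imp_iff {s t : Tm} :
    HasTy (impTm s t) .base ↔ HasTy s .base ∧ HasTy t .base := by
  refine ⟨fun h => ?_, fun h => hasTy_imp h.1 h.2⟩
  obtain _ | _ | ⟨h₁, ht⟩ := h
  obtain _ | _ | ⟨himp, hs⟩ := h₁
  have h := (HasTy.name .imp).unique himp
  simp only [Name.ty, Ty.arrow.injEq] at h
  obtain ⟨rfl, rfl, -⟩ := h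
  exact ⟨hs, ht⟩

theorem hasTy_top : HasTy topTm .base := hasTy_imp hasTy_bot hasTy_bot

theorem hasTy_neg {s : Tm} (h : HasTy s .base) : HasTy (negTm s) .base := hasTy_imp h hasTy_bot

theorem hasTy_neg_iff {s : Tm} : HasTy (negTm s) .base ↔ HasTy s .base := by
  simp [negTm, hasTy_imp_iff, hasTy_bot]

theorem hasTy_or {s t : Tm} (hs : HasTy s .base) (ht : HasTy t .base) :
    HasTy (orTm s t) .base :=
  hasTy_imp (hasTy_imp hs ht) ht

theorem hasTy_or_iff {s t : Tm} : HasTy (orTm s t) .base ↔ HasTy s .base ∧ HasTy t .base := by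
  rw [orTm, hasTy_imp_iff, hasTy_imp_iff]; tauto

theorem hasTy_and {s t : Tm} (hs : HasTy s .base) (ht : HasTy t .base) :
    HasTy (andTm s t) .base :=
  hasTy_neg (hasTy_or (hasTy_neg hs) (hasTy_neg ht))

theorem hasTy_and_iff {s t : Tm} : HasTy (andTm s t) .base ↔ HasTy s .base ∧ HasTy t .base := by
  rw [andTm, hasTy_neg_iff, hasTy_or_iff, hasTy_neg_iff, hasTy_neg_iff]

theorem hasTy_equiv {s t : Tm} (hs : HasTy s .base) (ht : HasTy t .base) :
    HasTy (equivTm s t) .base :=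
  hasTy_and (hasTy_imp hs ht) (hasTy_imp ht hs)

/-! ### α-equivalence via de Bruijn forms

Two well-typed terms with the same de Bruijn form are λ-equivalent, so every identity between
substitutions that holds up to renaming of bound variables yields an instance of `LamEq`. -/

inductive DTm : Type
  | bvar : ℕ → DTm
  | fvar : ℕ × Ty → DTm
  | dbot : DTm
  | dimp : DTm
  | dlam : Ty → DTm → DTm
  | dapp : DTm → DTm → DTm

/-- `db s e d` is the de Bruijn form of `s` under `d` binders, where `e` records the depth at
which each bound variable was bound. -/
def db : Tm → (ℕ × Ty → Option ℕ) → ℕ → DTm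
  | .name (.var n σ), e, d =>
      match e (n, σ) with
      | some k => .bvar (d - k - 1)
      | none => .fvar (n, σ)
  | .name .bot, _, _ => .dbot
  | .name .imp, _, _ => .dimp
  | .app s t, e, d => .dapp (db s e d) (db t e d)
  | .lam n σ s, e, d => .dlam σ (db s (Function.update e (n, σ) (some d)) (d + 1))

def db0 (s : Tm) : DTm := db s (fun _ => none) 0

@[simp] theorem db_var {n : ℕ} {σ : Ty} {e : ℕ × Ty → Option ℕ} {d : ℕ} :
    db (.name (.var n σ)) e d =
      (match e (n, σ) with
        | some k => .bvar (d - k - 1)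
        | none => .fvar (n, σ)) := rfl
@[simp] theorem db_app {s t : Tm} {e : ℕ × Ty → Option ℕ} {d : ℕ} :
    db (.app s t) e d = .dapp (db s e d) (db t e d) := rfl
@[simp] theorem db_lam {n : ℕ} {σ : Ty} {s : Tm} {e : ℕ × Ty → Option ℕ} {d : ℕ} :
    db (.lam n σ s) e d = .dlam σ (db s (Function.update e (n, σ) (some d)) (d + 1)) := rfl
@[simp] theorem db0_vr {n : ℕ} {σ : Ty} : db0 (vr n σ) = .fvar (n, σ) := rfl

def dsubst : DTm → (ℕ × Ty → DTm) → DTm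
  | .bvar k, _ => .bvar k
  | .fvar p, f => f p
  | .dbot, _ => .dbot
  | .dimp, _ => .dimp
  | .dlam σ b, f => .dlam σ (dsubst b f)
  | .dapp s t, f => .dapp (dsubst s f) (dsubst t f)

theorem db_congr {s : Tm} {e e' : ℕ × Ty → Option ℕ} {d d' : ℕ}
    (h : ∀ p ∈ fv s, (e p = none ∧ e' p = none) ∨
      ∃ k k', e p = some k ∧ e' p = some k' ∧ k < d ∧ k' < d' ∧ d - k = d' - k') :
    db s e d = db s e' d' := by
  induction s generalizing e e' d d' with
  | name x =>
      cases x with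
      | var n σ =>
          rcases h (n, σ) (by simp) with ⟨h₁, h₂⟩ | ⟨k, k', h₁, h₂, -, -, h₅⟩
          · simp [h₁, h₂]
          · simp [h₁, h₂]; omega
      | bot => rfl
      | imp => rfl
  | app s t ihs iht =>
      simp only [db_app]
      rw [ihs fun p hp => h p (by simp [hp]), iht fun p hp => h p (by simp [hp])]
  | lam n σ s ih =>
      simp only [db_lam]
      congr 1
      refine ih fun p hp => ?_
      by_cases hpn : p = (n, σ)
      · subst hpn
        exact Or.inr ⟨d, d', by simp, by simp, by omega, by omega, by omega⟩
      · rw [Function.update_of_ne hpn, Function.update_of_ne hpn]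
        rcases h p (by simp [hp, hpn]) with h' | ⟨k, k', h₁, h₂, h₃, h₄, h₅⟩
        · exact Or.inl h'
        · exact Or.inr ⟨k, k', h₁, h₂, by omega, by omega, by omega⟩

theorem db_eq_db0 {s : Tm} {e : ℕ × Ty → Option ℕ} {d : ℕ} (h : ∀ p ∈ fv s, e p = none) :
    db s e d = db0 s :=
  db_congr fun p hp => Or.inl ⟨h p hp, rfl⟩

theorem dsubst_db_congr {s : Tm} {e : ℕ × Ty → Option ℕ} {d : ℕ} {f g : ℕ × Ty → DTm}
    (h : ∀ p ∈ fv s, e p = none → f p = g p) :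
    dsubst (db s e d) f = dsubst (db s e d) g := by
  induction s generalizing e d with
  | name x =>
      cases x with
      | var n σ =>
          rcases he : e (n, σ) with _ | k
          · simpa [dsubst, he] using h (n, σ) (by simp) he
          · simp [dsubst, he]
      | bot => rfl
      | imp => rfl
  | app s t ihs iht =>
      simp only [db_app, dsubst]
      rw [ihs fun p hp => h p (by simp [hp]), iht fun p hp => h p (by simp [hp])]
  | lam n σ s ih =>
      simp only [db_lam, dsubst]
      congr 1
      refine ih fun p hp hn => ?_
      by_cases hpn : p = (n, σ)
      · subst hpn; simp at hn
      · rw [Function.update_of_ne hpn] at hn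
        exact h p (by simp [hp, hpn]) hn

theorem dsubst_fvar (D : DTm) : dsubst D .fvar = D := by
  induction D <;> simp_all [dsubst]

theorem dsubst_dsubst (D : DTm) (f g : ℕ × Ty → DTm) :
    dsubst (dsubst D f) g = dsubst D fun p => dsubst (f p) g := by
  induction D <;> simp_all [dsubst]

/-- Stated for arbitrary environments so that the induction passes under the binders that
`substAux` renames: a variable of `s` bound in `e'` must be renamed to one bound at the same
depth in `e`. -/
theorem db_substAux {s : Tm} {ρ : ℕ × Ty → Tm} {e e' : ℕ × Ty → Option ℕ} {d : ℕ}
    (h : ∀ p ∈ fv s,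
      (∃ k, e' p = some k ∧ ∃ m, ρ p = vr m p.2 ∧ e (m, p.2) = some k) ∨
      (e' p = none ∧ ∀ q ∈ fv (ρ p), e q = none)) :
    db (substAux ρ s) e d = dsubst (db s e' d) fun p => db0 (ρ p) := by
  induction s generalizing ρ e e' d with
  | name x =>
      cases x with
      | var n σ =>
          rcases h (n, σ) (by simp) with ⟨k, he', m, hρ, he⟩ | ⟨he', hq⟩
          · rw [show substAux ρ (.name (.var n σ)) = ρ (n, σ) from rfl, hρ]
            simp [dsubst, he', he, vr]
          · rw [show substAux ρ (.name (.var n σ)) = ρ (n, σ) from rfl]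
            simpa [dsubst, he'] using db_eq_db0 hq
      | bot => rfl
      | imp => rfl
  | app s t ihs iht =>
      simp only [substAux_app, db_app, dsubst]
      rw [ihs fun p hp => h p (by simp [hp]), iht fun p hp => h p (by simp [hp])]
  | lam n σ s ih =>
      rw [substAux_lam]
      simp only [db_lam, dsubst]
      congr 1
      rw [ih (e' := Function.update e' (n, σ) (some d))]
      · refine dsubst_db_congr fun p _ hn => ?_
        by_cases hpn : p = (n, σ)
        · subst hpn; simp at hn
        · rw [Function.update_of_ne hpn]
      · intro p hp
        by_cases hpn : p = (n, σ)
        · subst hpn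
          exact Or.inl ⟨d, by simp, freshIdx ρ n σ s, by simp, by simp⟩
        have hpe : p ∈ (fv s).erase (n, σ) := Finset.mem_erase.2 ⟨hpn, hp⟩
        have hne : ∀ q ∈ fv (ρ p), q ≠ (freshIdx ρ n σ s, σ) := fun q hq hc =>
          freshIdx_ne hpe hq (congrArg Prod.fst hc)
        simp only [Function.update_of_ne hpn]
        rcases h p (by simpa using hpe) with ⟨k, he', m', hρ, he⟩ | ⟨he', hq⟩
        · refine Or.inl ⟨k, he', m', hρ, ?_⟩
          rw [Function.update_of_ne (hne _ (by rw [hρ]; simp))]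
          exact he
        · exact Or.inr ⟨he', fun q hq' => by rw [Function.update_of_ne (hne q hq')]; exact hq q hq'⟩

theorem db0_substAux (s : Tm) (ρ : ℕ × Ty → Tm) :
    db0 (substAux ρ s) = dsubst (db0 s) fun p => db0 (ρ p) :=
  db_substAux fun _ _ => Or.inr ⟨rfl, fun _ _ => rfl⟩

theorem db0_substAux_of_eqOn {s : Tm} {ρ : ℕ × Ty → Tm} (h : ∀ p ∈ fv s, ρ p = idSub p) :
    db0 (substAux ρ s) = db0 s := by
  rw [db0_substAux, db0, dsubst_db_congr (g := .fvar) fun p hp _ => by rw [h p hp]; rfl,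
    dsubst_fvar]

theorem db0_substAux_substAux (s : Tm) (ρ θ : ℕ × Ty → Tm) :
    db0 (substAux θ (substAux ρ s)) = db0 (substAux (fun p => substAux θ (ρ p)) s) := by
  simp only [db0_substAux, dsubst_dsubst]

theorem db0_substAux_congr {s : Tm} {ρ ρ' : ℕ × Ty → Tm}
    (h : ∀ p ∈ fv s, db0 (ρ p) = db0 (ρ' p)) :
    db0 (substAux ρ s) = db0 (substAux ρ' s) := by
  rw [db0_substAux, db0_substAux]
  exact dsubst_db_congr fun p hp _ => h p hp

def fvD : DTm → Finset (ℕ × Ty)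
  | .bvar _ => ∅
  | .fvar p => {p}
  | .dbot => ∅
  | .dimp => ∅
  | .dlam _ b => fvD b
  | .dapp s t => fvD s ∪ fvD t

def closeD : DTm → ℕ × Ty → ℕ → DTm
  | .bvar k, _, _ => .bvar k
  | .fvar q, p, i => if q = p then .bvar i else .fvar q
  | .dbot, _, _ => .dbot
  | .dimp, _, _ => .dimp
  | .dlam σ b, p, i => .dlam σ (closeD b p (i + 1))
  | .dapp s t, p, i => .dapp (closeD s p i) (closeD t p i)

def openD : DTm → ℕ × Ty → ℕ → DTm
  | .bvar k, q, i => if k = i then .fvar q else .bvar k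
  | .fvar r, _, _ => .fvar r
  | .dbot, _, _ => .dbot
  | .dimp, _, _ => .dimp
  | .dlam σ b, q, i => .dlam σ (openD b q (i + 1))
  | .dapp s t, q, i => .dapp (openD s q i) (openD t q i)

def ClosedAt : DTm → ℕ → Prop
  | .bvar k, c => k < c
  | .fvar _, _ => True
  | .dbot, _ => True
  | .dimp, _ => True
  | .dlam _ b, c => ClosedAt b (c + 1)
  | .dapp s t, c => ClosedAt s c ∧ ClosedAt t c

theorem fvD_db {s : Tm} {e : ℕ × Ty → Option ℕ} {d : ℕ} {p : ℕ × Ty}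
    (hp : p ∈ fvD (db s e d)) : p ∈ fv s ∧ e p = none := by
  induction s generalizing e d with
  | name x =>
      cases x with
      | var n σ =>
          rcases he : e (n, σ) with _ | k
          · simp only [db_var, he, fvD, Finset.mem_singleton] at hp
            subst hp; exact ⟨by simp, he⟩
          · simp [he, fvD] at hp
      | bot => simp [db, fvD] at hp
      | imp => simp [db, fvD] at hp
  | app s t ihs iht =>
      simp only [db_app, fvD, Finset.mem_union] at hp
      rcases hp with hp | hp
      · exact ⟨by simp [(ihs hp).1], (ihs hp).2⟩
      · exact ⟨by simp [(iht hp).1], (iht hp).2⟩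
  | lam n σ s ih =>
      obtain ⟨h₁, h₂⟩ := ih hp
      by_cases hpn : p = (n, σ)
      · subst hpn; simp at h₂
      · rw [Function.update_of_ne hpn] at h₂
        exact ⟨by simp [h₁, hpn], h₂⟩

theorem closedAt_db {s : Tm} {e : ℕ × Ty → Option ℕ} {d c : ℕ}
    (h : ∀ p k, p ∈ fv s → e p = some k → d - k - 1 < c) : ClosedAt (db s e d) c := by
  induction s generalizing e d c with
  | name x =>
      cases x with
      | var n σ =>
          rcases he : e (n, σ) with _ | k
          · simp only [db_var, he]; trivial
          · simp only [db_var, he]; exact h (n, σ) k (by simp) he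
      | bot => trivial
      | imp => trivial
  | app s t ihs iht =>
      exact ⟨ihs fun p k hp => h p k (by simp [hp]), iht fun p k hp => h p k (by simp [hp])⟩
  | lam n σ s ih =>
      refine ih (c := c + 1) fun p k hp he => ?_
      by_cases hpn : p = (n, σ)
      · subst hpn; simp at he; omega
      · rw [Function.update_of_ne hpn] at he
        have := h p k (by simp [hp, hpn]) he
        omega

theorem closedAt_db0 (s : Tm) : ClosedAt (db0 s) 0 :=
  closedAt_db fun _ _ _ h => by simp at h

theorem openD_closeD {D : DTm} {i : ℕ} (hc : ClosedAt D i) (p q : ℕ × Ty) :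
    openD (closeD D p i) q i = dsubst D (Function.update .fvar p (.fvar q)) := by
  induction D generalizing i with
  | bvar k =>
      simp only [ClosedAt] at hc
      simp only [closeD, openD, dsubst]
      rw [if_neg (by omega)]
  | fvar r =>
      by_cases hr : r = p
      · subst hr; simp [closeD, openD, dsubst]
      · simp [closeD, openD, dsubst, hr]
  | dbot => rfl
  | dimp => rfl
  | dlam σ b ih => simp only [closeD, openD, dsubst]; rw [ih hc]
  | dapp s t ihs iht => simp only [closeD, openD, dsubst]; rw [ihs hc.1, iht hc.2]

theorem closeD_of_not_mem {D : DTm} {p : ℕ × Ty} (i : ℕ) (hp : p ∉ fvD D) :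
    closeD D p i = D := by
  induction D generalizing i with
  | fvar r =>
      simp only [fvD, Finset.mem_singleton] at hp
      simp only [closeD]
      rw [if_neg fun h => hp h.symm]
  | dlam σ b ih => simp only [closeD]; rw [ih (i + 1) hp]
  | dapp s t ihs iht =>
      simp only [fvD, Finset.mem_union, not_or] at hp
      simp only [closeD]; rw [ihs i hp.1, iht i hp.2]
  | _ => rfl

theorem db_update_eq_closeD {s : Tm} {e : ℕ × Ty → Option ℕ} {d n : ℕ} {σ : Ty} {k : ℕ}
    (he : e (n, σ) = none) (hk : k < d) :
    db s (Function.update e (n, σ) (some k)) d = closeD (db s e d) (n, σ) (d - k - 1) := by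
  induction s generalizing e d k with
  | name x =>
      cases x with
      | var n' σ' =>
          by_cases hp : (n', σ') = (n, σ)
          · obtain ⟨rfl, rfl⟩ := Prod.ext_iff.1 hp
            simp [he, closeD]
          · simp only [db_var, Function.update_of_ne hp]
            rcases e (n', σ') with _ | j
            · simp [closeD, hp]
            · simp [closeD]
      | bot => rfl
      | imp => rfl
  | app s t ihs iht => simp only [db_app, closeD]; rw [ihs he hk, iht he hk]
  | lam m τ s ih =>
      simp only [db_lam, closeD]
      by_cases hmn : (m, τ) = (n, σ)
      · rw [hmn, Function.update_idem, closeD_of_not_mem]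
        intro hc
        simpa using (fvD_db hc).2
      · rw [Function.update_comm (Ne.symm hmn),
          ih (by rw [Function.update_of_ne (Ne.symm hmn)]; exact he) (by omega),
          show d + 1 - k - 1 = d - k - 1 + 1 by omega]

theorem db0_lam {n : ℕ} {σ : Ty} {s : Tm} :
    db0 (.lam n σ s) = .dlam σ (closeD (db0 s) (n, σ) 0) := by
  simp only [db0, db_lam]
  rw [db_update_eq_closeD rfl (by omega)]
  exact congrArg (fun D => DTm.dlam σ (closeD D (n, σ) 0)) (db_congr fun _ _ => Or.inl ⟨rfl, rfl⟩)

theorem db0_subst_vr {s : Tm} {n m : ℕ} {σ : Ty} :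
    db0 (subst s n σ (vr m σ)) = openD (closeD (db0 s) (n, σ) 0) (m, σ) 0 := by
  rw [openD_closeD (closedAt_db0 s), subst, db0_substAux]
  congr 1
  funext p
  by_cases hp : p = (n, σ)
  · subst hp; simp
  · simp [Function.update_of_ne hp]

/-- `L` lists the types of the bound indices. -/
def dTypeOf : DTm → List Ty → Option Ty
  | .bvar k, L => L[k]?
  | .fvar p, _ => some p.2
  | .dbot, _ => some .base
  | .dimp, _ => some (.arrow .base (.arrow .base .base))
  | .dlam σ b, L => (dTypeOf b (σ :: L)).map (Ty.arrow σ)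
  | .dapp s t, L =>
      match dTypeOf s L, dTypeOf t L with
      | some (.arrow σ τ), some σ' => if σ = σ' then some τ else none
      | _, _ => none

theorem HasTy.dTypeOf_db {s : Tm} {σ : Ty} (hty : HasTy s σ) {e : ℕ × Ty → Option ℕ} {d : ℕ}
    {L : List Ty} (h : ∀ p k, e p = some k → k < d ∧ L[d - k - 1]? = some p.2) :
    dTypeOf (db s e d) L = some σ := by
  induction hty generalizing e d L with
  | name x =>
      cases x with
      | var n σ =>
          rcases he : e (n, σ) with _ | k
          · simp [he, dTypeOf, Name.ty]
          · simp only [db_var, he, dTypeOf]; exact (h (n, σ) k he).2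
      | bot => rfl
      | imp => rfl
  | @lam n σ₀ b τ _ ih =>
      simp only [db_lam, dTypeOf]
      rw [ih (L := σ₀ :: L)]
      · rfl
      intro p k he
      by_cases hpn : p = (n, σ₀)
      · subst hpn
        simp only [Function.update_self, Option.some.injEq] at he
        subst he
        simp
      · rw [Function.update_of_ne hpn] at he
        obtain ⟨h₁, h₂⟩ := h p k he
        refine ⟨by omega, ?_⟩
        rw [show d + 1 - k - 1 = d - k - 1 + 1 by omega]
        simpa using h₂
  | app _ _ ihs iht => simp [dTypeOf, ihs h, iht h]

theorem HasTy.dTypeOf_db0 {s : Tm} {σ : Ty} (h : HasTy s σ) : dTypeOf (db0 s) [] = some σ :=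
  h.dTypeOf_db fun _ _ he => by simp at he

theorem LamEq.hasTy_iff {s t : Tm} (h : LamEq s t) {σ : Ty} : HasTy s σ ↔ HasTy t σ := by
  induction h generalizing σ with
  | refl => rfl
  | symm _ ih => exact ih.symm
  | trans _ _ ih₁ ih₂ => exact ih₁.trans ih₂
  | alpha h _ =>
      cases h with | lam hb =>
      constructor
      · rintro (_ | ⟨hb'⟩); exact HasTy.lam (hb'.subst hasTy_vr)
      · rintro (_ | ⟨hb'⟩)
        rw [hb'.unique (hb.subst hasTy_vr)]
        exact HasTy.lam hb
  | beta h =>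
      obtain _ | _ | ⟨_ | ⟨hb⟩ | _, hu⟩ := h
      constructor
      · rintro (_ | _ | ⟨_ | ⟨hb'⟩ | _, hu'⟩)
        rw [hb'.unique hb]
        exact hb.subst hu
      · intro h'
        rw [h'.unique (hb.subst hu)]
        exact HasTy.app (HasTy.lam hb) hu
  | eta h _ =>
      obtain _ | ⟨_ | _ | ⟨hs, hx⟩⟩ := h
      cases hasTy_vr.unique hx
      constructor
      · rintro (_ | ⟨_ | _ | ⟨hs', hx'⟩⟩)
        cases hasTy_vr.unique hx'
        exact hs'
      · intro h'
        rw [h'.unique hs]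
        exact HasTy.lam (HasTy.app hs hx)
  | ctx C _ _ ih =>
      constructor
      · intro h'
        obtain ⟨υ, hυ⟩ := Ctx.exists_hasTy_of_hasTy_fill h'
        exact Ctx.hasTy_fill_of_hasTy_fill h' hυ (ih.1 hυ)
      · intro h'
        obtain ⟨υ, hυ⟩ := Ctx.exists_hasTy_of_hasTy_fill h'
        exact Ctx.hasTy_fill_of_hasTy_fill h' hυ (ih.2 hυ)

theorem LamEq.hasTy {s t : Tm} (h : LamEq s t) {σ : Ty} (hs : HasTy s σ) : HasTy t σ :=
  h.hasTy_iff.1 hs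

theorem LamEq.app_left {s s' t : Tm} {σ : Ty} (h : LamEq s s') (hty : HasTy (.app s t) σ) :
    LamEq (.app s t) (.app s' t) :=
  LamEq.ctx (Ctx.appL Ctx.hole t) h hty

theorem LamEq.app_right {s t t' : Tm} {σ : Ty} (h : LamEq t t') (hty : HasTy (.app s t) σ) :
    LamEq (.app s t) (.app s t') :=
  LamEq.ctx (Ctx.appR s Ctx.hole) h hty

theorem LamEq.app {s s' t t' : Tm} {σ : Ty} (h₁ : LamEq s s') (h₂ : LamEq t t')
    (hty : HasTy (.app s t) σ) : LamEq (.app s t) (.app s' t') :=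
  (h₁.app_left hty).trans (h₂.app_right ((h₁.app_left hty).hasTy hty))

theorem fresh_not_mem (S : Finset (ℕ × Ty)) (σ : Ty) : (S.sup Prod.fst + 1, σ) ∉ S := fun h => by
  have := Finset.le_sup (f := Prod.fst) h
  simp only at this
  omega

theorem name_eq_of_db0_eq {x y : Name} (h : db0 (.name x) = db0 (.name y)) : x = y := by
  cases x <;> cases y <;> simp_all [db0, db]

theorem lamEq_of_db0_eq {s t : Tm} {σ : Ty} (hs : HasTy s σ) (ht : HasTy t σ)
    (h : db0 s = db0 t) : LamEq s t := by
  match s, t, h with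
  | .name x, .name y, h =>
      cases name_eq_of_db0_eq h
      exact LamEq.refl hs
  | .app s₁ s₂, .app t₁ t₂, h =>
      simp only [db0, db_app, DTm.dapp.injEq] at h
      obtain _ | _ | ⟨hs₁, hs₂⟩ := hs
      obtain _ | _ | ⟨ht₁, ht₂⟩ := ht
      have harg := hs₂.dTypeOf_db0
      rw [show db0 s₂ = db0 t₂ from h.2, ht₂.dTypeOf_db0, Option.some_inj] at harg
      subst harg
      exact (lamEq_of_db0_eq hs₁ ht₁ h.1).app (lamEq_of_db0_eq hs₂ ht₂ h.2) (.app hs₁ hs₂)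
  | .lam n σ₀ s₁, .lam n' σ₀' t₁, h =>
      rw [db0_lam, db0_lam, DTm.dlam.injEq] at h
      obtain ⟨rfl, hbody⟩ := h
      obtain _ | ⟨hs₁⟩ := hs
      obtain _ | ⟨ht₁⟩ := ht
      set m := (fv s₁ ∪ fv t₁).sup Prod.fst + 1
      have hms : (m, σ₀) ∉ fv s₁ := fun hc => fresh_not_mem _ σ₀ (Finset.mem_union_left _ hc)
      have hmt : (m, σ₀) ∉ fv t₁ := fun hc => fresh_not_mem _ σ₀ (Finset.mem_union_right _ hc)
      have hs' := hs₁.subst (n := n) (hasTy_vr (n := m) (σ := σ₀))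
      have hinner : LamEq (subst s₁ n σ₀ (vr m σ₀)) (subst t₁ n' σ₀ (vr m σ₀)) :=
        lamEq_of_db0_eq hs' (ht₁.subst hasTy_vr) (by rw [db0_subst_vr, db0_subst_vr, hbody])
      exact (LamEq.alpha (.lam hs₁) hms).trans
        ((LamEq.ctx (Ctx.lam m σ₀ Ctx.hole) hinner (.lam hs')).trans
          (LamEq.alpha (.lam ht₁) hmt).symm)
  | .name x, .app _ _, h | .name x, .lam _ _ _, h => cases x <;> simp [db0, db] at h
  | .app _ _, .name y, h | .lam _ _ _, .name y, h => cases y <;> simp [db0, db] at h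
  | .app _ _, .lam _ _ _, h | .lam _ _ _, .app _ _, h => simp [db0] at h
termination_by s.size
decreasing_by all_goals simp only [Tm.size, size_subst_vr]; omega

theorem lamEq_substAux_of_eqOn {s : Tm} {σ : Ty} (hs : HasTy s σ) {ρ : ℕ × Ty → Tm}
    (h : ∀ p ∈ fv s, ρ p = idSub p) : LamEq (substAux ρ s) s :=
  lamEq_of_db0_eq (hs.substAux fun p hp => by rw [h p hp]; exact hasTy_vr) hs
    (db0_substAux_of_eqOn h)

theorem Closed.fv_eq {s : Tm} (h : Closed s) : fv s = ∅ := h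

theorem Closed.lamEq_substAux {s : Tm} (hc : Closed s) {σ : Ty} (hs : HasTy s σ)
    (ρ : ℕ × Ty → Tm) : LamEq (substAux ρ s) s :=
  lamEq_substAux_of_eqOn hs fun p hp => by simp [hc.fv_eq] at hp

theorem lamEq_substAux_substAux {s : Tm} {σ : Ty} (hs : HasTy s σ) {ρ θ : ℕ × Ty → Tm}
    (hρ : IsSubstitution ρ) (hθ : IsSubstitution θ) :
    LamEq (substAux θ (substAux ρ s)) (substAux (fun p => substAux θ (ρ p)) s) :=
  lamEq_of_db0_eq ((hs.substAux_of_isSubstitution hρ).substAux_of_isSubstitution hθ)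
    (hs.substAux fun p _ => (hρ p.1 p.2).substAux_of_isSubstitution hθ)
    (db0_substAux_substAux s ρ θ)

theorem lamEq_substAux_congr {s : Tm} {σ : Ty} (hs : HasTy s σ) {ρ ρ' : ℕ × Ty → Tm}
    (hρ : IsSubstitution ρ) (hρ' : IsSubstitution ρ')
    (h : ∀ p ∈ fv s, db0 (ρ p) = db0 (ρ' p)) : LamEq (substAux ρ s) (substAux ρ' s) :=
  lamEq_of_db0_eq (hs.substAux_of_isSubstitution hρ) (hs.substAux_of_isSubstitution hρ')
    (db0_substAux_congr h)

/-- `substAux ρ` renames the binder to a fresh `m`; β instantiates `m` by `u`, and freshness of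
`m` makes the composite substitution agree with `Function.update ρ (n, σ) u`. -/
theorem lamEq_app_substAux_lam {ρ : ℕ × Ty → Tm} (hρ : IsSubstitution ρ) {n : ℕ} {σ τ : Ty}
    {b u : Tm} (hb : HasTy b τ) (hu : HasTy u σ) :
    LamEq (.app (substAux ρ (.lam n σ b)) u) (substAux (Function.update ρ (n, σ) u) b) := by
  set m := freshIdx ρ n σ b
  have hρ' : IsSubstitution (Function.update ρ (n, σ) (vr m σ)) := hρ.update hasTy_vr
  have hθ : IsSubstitution (Function.update idSub (m, σ) u) := isSubstitution_idSub.update hu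
  rw [substAux_lam]
  refine (LamEq.beta (.app (.lam (hb.substAux_of_isSubstitution hρ')) hu)).trans
    ((lamEq_substAux_substAux hb hρ' hθ).trans
      (lamEq_substAux_congr hb (fun _ _ => (hρ' _ _).substAux_of_isSubstitution hθ)
        (hρ.update hu) fun p hp => ?_))
  by_cases hpn : p = (n, σ)
  · subst hpn; simp
  · rw [Function.update_of_ne hpn, Function.update_of_ne hpn]
    refine db0_substAux_of_eqOn fun q hq => Function.update_of_ne (fun hqm => ?_) _ _
    exact freshIdx_ne (Finset.mem_erase.2 ⟨hpn, hp⟩) hq (congrArg Prod.fst hqm)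

theorem lamEq_app_app_lam_lam {n₁ n₂ : ℕ} {σ₁ σ₂ τ : Ty} {b u v : Tm} (hb : HasTy b τ)
    (hu : HasTy u σ₁) (hv : HasTy v σ₂) :
    LamEq (.app (.app (.lam n₁ σ₁ (.lam n₂ σ₂ b)) u) v)
      (substAux (Function.update (Function.update idSub (n₁, σ₁) u) (n₂, σ₂) v) b) := by
  have hρ := isSubstitution_idSub.update (n := n₁) hu
  exact ((LamEq.beta (.app (.lam (.lam hb)) hu)).app_left
    (.app (.app (.lam (.lam hb)) hu) hv)).trans (lamEq_app_substAux_lam hρ hb hv)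

/-! ### Derived rules -/

def IsFormulaSet (A : Finset Tm) : Prop := ∀ u ∈ A, HasTy u .base

theorem isFormulaSet_empty : IsFormulaSet ∅ := by simp [IsFormulaSet]

theorem IsFormulaSet.insert {A : Finset Tm} (hA : IsFormulaSet A) {s : Tm}
    (hs : HasTy s .base) : IsFormulaSet (insert s A) := by
  intro u hu
  rcases Finset.mem_insert.1 hu with rfl | hu
  · exact hs
  · exact hA u hu

theorem Ded.isFormulaSet_and_hasTy {A : Finset Tm} {s : Tm} (h : Ded A s) :
    IsFormulaSet A ∧ HasTy s .base := by
  induction h with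
  | triv hA hs => exact ⟨IsFormulaSet.insert hA hs, hs⟩
  | weak hs _ ih => exact ⟨ih.1.insert hs, ih.2⟩
  | @ded A s t _ ih =>
      exact ⟨fun u hu => ih.1 u (Finset.mem_insert_of_mem hu),
        hasTy_imp (ih.1 s (Finset.mem_insert_self s A)) ih.2⟩
  | mp _ _ ih _ => exact ⟨ih.1, (hasTy_imp_iff.1 ih.2).2⟩
  | dn _ ih => exact ⟨ih.1, hasTy_neg_iff.1 (hasTy_neg_iff.1 ih.2)⟩
  | lam _ _ ht ih => exact ⟨ih.1, ht⟩
  | br _ _ _ _ ht _ ih => exact ⟨ih.1, ht⟩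

namespace Ded

variable {A B : Finset Tm} {s t u : Tm}

theorem isFormulaSet (h : Ded A s) : IsFormulaSet A := h.isFormulaSet_and_hasTy.1

theorem hasTy (h : Ded A s) : HasTy s .base := h.isFormulaSet_and_hasTy.2

theorem of_mem (hA : IsFormulaSet A) (hs : s ∈ A) : Ded A s := by
  rw [← Finset.insert_erase hs]
  exact triv (fun u hu => hA u (Finset.mem_of_mem_erase hu)) (hA s hs)

theorem mono (h : Ded A t) (hAB : A ⊆ B) (hB : IsFormulaSet B) : Ded B t := by
  have h' : ∀ E : Finset Tm, IsFormulaSet E → Ded (A ∪ E) t := by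
    intro E hE
    induction E using Finset.induction_on with
    | empty => simpa using h
    | insert a E _ ih =>
        rw [Finset.union_insert]
        exact weak (hE a (Finset.mem_insert_self a E))
          (ih fun u hu => hE u (Finset.mem_insert_of_mem hu))
  simpa [Finset.union_eq_right.2 hAB] using h' B hB

theorem of_empty (h : Ded ∅ t) (hA : IsFormulaSet A) : Ded A t :=
  h.mono (Finset.empty_subset A) hA

theorem cut (h₁ : Ded A s) (h₂ : Ded (insert s A) t) : Ded A t := mp (ded h₂) h₁

theorem lamEq (h : Ded A s) (hl : LamEq s t) : Ded A t := Ded.lam h hl (hl.hasTy h.hasTy)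

theorem exfalso (h : Ded A botTm) (ht : HasTy t .base) : Ded A t :=
  dn (ded (weak (hasTy_neg ht) h))

theorem top (hA : IsFormulaSet A) : Ded A topTm := ded (triv hA hasTy_bot)

theorem by_cases (h₁ : Ded (insert s A) t) (h₂ : Ded (insert (negTm s) A) t) : Ded A t := by
  have hA : IsFormulaSet A := fun u hu => h₁.isFormulaSet u (Finset.mem_insert_of_mem hu)
  have hs : HasTy s .base := h₁.isFormulaSet s (Finset.mem_insert_self s A)
  have hnt := hasTy_neg h₁.hasTy
  have hns : Ded (insert (negTm t) A) (negTm s) :=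
    ded (mp (weak hs (triv hA hnt)) (mp (weak hs (weak hnt (ded h₁))) (triv (hA.insert hnt) hs)))
  exact dn (ded (mp (triv hA hnt) (mp (weak hnt (ded h₂)) hns)))

theorem imp_of_neg (h : Ded A (negTm s)) (ht : HasTy t .base) : Ded A (impTm s t) := by
  have hs := hasTy_neg_iff.1 h.hasTy
  exact ded (exfalso (mp (weak hs h) (triv h.isFormulaSet hs)) ht)

theorem or_inl (h : Ded A s) (ht : HasTy t .base) : Ded A (orTm s t) := by
  have hst := hasTy_imp h.hasTy ht
  exact ded (mp (triv h.isFormulaSet hst) (weak hst h))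

theorem or_inr (h : Ded A t) (hs : HasTy s .base) : Ded A (orTm s t) :=
  ded (weak (hasTy_imp hs h.hasTy) h)

theorem or_elim (h : Ded A (orTm s t)) (h₁ : Ded (insert s A) u) (h₂ : Ded (insert t A) u) :
    Ded A u := by
  obtain ⟨hs, ht⟩ := hasTy_or_iff.1 h.hasTy
  have hns := hasTy_neg hs
  refine by_cases h₁ (mp (weak hns (ded h₂)) (mp (weak hns h) ?_))
  exact imp_of_neg (triv h.isFormulaSet hns) ht

theorem and_intro (h₁ : Ded A s) (h₂ : Ded A t) : Ded A (andTm s t) := by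
  have hns := hasTy_neg h₁.hasTy
  have hnt := hasTy_neg h₂.hasTy
  have ho := hasTy_or hns hnt
  have hA := h₁.isFormulaSet.insert ho
  exact ded (or_elim (triv h₁.isFormulaSet ho) (mp (triv hA hns) (weak hns (weak ho h₁)))
    (mp (triv hA hnt) (weak hnt (weak ho h₂))))

theorem and_left (h : Ded A (andTm s t)) : Ded A s := by
  obtain ⟨hs, ht⟩ := hasTy_and_iff.1 h.hasTy
  have hns := hasTy_neg hs
  exact dn (ded (mp (weak hns h) (or_inl (triv h.isFormulaSet hns) (hasTy_neg ht))))

theorem and_right (h : Ded A (andTm s t)) : Ded A t := by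
  obtain ⟨hs, ht⟩ := hasTy_and_iff.1 h.hasTy
  have hnt := hasTy_neg ht
  exact dn (ded (mp (weak hnt h) (or_inr (triv h.isFormulaSet hnt) (hasTy_neg hs))))

theorem equiv_mp (h : Ded A (equivTm s t)) (hs : Ded A s) : Ded A t := mp (and_left h) hs

theorem equiv_mpr (h : Ded A (equivTm s t)) (ht : Ded A t) : Ded A s := mp (and_right h) ht

theorem equiv_of_ded (h₁ : Ded A s) (h₂ : Ded A t) : Ded A (equivTm s t) :=
  and_intro (ded (weak h₁.hasTy h₂)) (ded (weak h₂.hasTy h₁))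

theorem equiv_of_neg (h₁ : Ded A (negTm s)) (h₂ : Ded A (negTm t)) : Ded A (equivTm s t) :=
  and_intro (imp_of_neg h₁ (hasTy_neg_iff.1 h₂.hasTy)) (imp_of_neg h₂ (hasTy_neg_iff.1 h₁.hasTy))

end Ded

theorem andList_cons_cons {s a : Tm} {l : List Tm} :
    andList (s :: a :: l) = andTm s (andList (a :: l)) := rfl

theorem orList_cons_cons {s a : Tm} {l : List Tm} :
    orList (s :: a :: l) = orTm s (orList (a :: l)) := rfl

theorem hasTy_andList : ∀ {l : List Tm}, (∀ u ∈ l, HasTy u .base) → HasTy (andList l) .base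
  | [], _ => hasTy_top
  | [s], h => h s (by simp)
  | s :: _ :: _, h =>
      hasTy_and (h s (by simp)) (hasTy_andList fun u hu => h u (List.mem_cons_of_mem s hu))

theorem hasTy_orList : ∀ {l : List Tm}, (∀ u ∈ l, HasTy u .base) → HasTy (orList l) .base
  | [], _ => hasTy_bot
  | [s], h => h s (by simp)
  | s :: _ :: _, h =>
      hasTy_or (h s (by simp)) (hasTy_orList fun u hu => h u (List.mem_cons_of_mem s hu))

theorem fv_andList_subset {S : Finset (ℕ × Ty)} :
    ∀ {l : List Tm}, (∀ u ∈ l, fv u ⊆ S) → fv (andList l) ⊆ S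
  | [], _ => by simp [andList, topTm]
  | [s], h => h s (by simp)
  | s :: _ :: _, h => by
      rw [andList_cons_cons, fv_and]
      exact Finset.union_subset (h s (by simp))
        (fv_andList_subset fun u hu => h u (List.mem_cons_of_mem s hu))

theorem fv_orList_subset {S : Finset (ℕ × Ty)} :
    ∀ {l : List Tm}, (∀ u ∈ l, fv u ⊆ S) → fv (orList l) ⊆ S
  | [], _ => by simp [orList]
  | [s], h => h s (by simp)
  | s :: _ :: _, h => by
      rw [orList_cons_cons, fv_or]
      exact Finset.union_subset (h s (by simp))
        (fv_orList_subset fun u hu => h u (List.mem_cons_of_mem s hu))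

theorem substAux_andList (ρ : ℕ × Ty → Tm) :
    ∀ l : List Tm, substAux ρ (andList l) = andList (l.map (substAux ρ))
  | [] => rfl
  | [_] => rfl
  | s :: a :: l => by
      rw [List.map_cons, List.map_cons, andList_cons_cons, andList_cons_cons, substAux_and,
        ← List.map_cons, substAux_andList ρ (a :: l)]

theorem substAux_orList (ρ : ℕ × Ty → Tm) :
    ∀ l : List Tm, substAux ρ (orList l) = orList (l.map (substAux ρ))
  | [] => rfl
  | [_] => rfl
  | s :: a :: l => by
      rw [List.map_cons, List.map_cons, orList_cons_cons, orList_cons_cons, substAux_or,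
        ← List.map_cons, substAux_orList ρ (a :: l)]

theorem LamEq.imp {s s' t t' : Tm} (h₁ : LamEq s s') (h₂ : LamEq t t')
    (hs : HasTy s .base) (ht : HasTy t .base) : LamEq (impTm s t) (impTm s' t') :=
  ((LamEq.refl (HasTy.name .imp)).app h₁ (.app (.name .imp) hs)).app h₂ (hasTy_imp hs ht)

theorem LamEq.neg {s s' : Tm} (h : LamEq s s') (hs : HasTy s .base) :
    LamEq (negTm s) (negTm s') :=
  h.imp (LamEq.refl hasTy_bot) hs hasTy_bot

theorem LamEq.or {s s' t t' : Tm} (h₁ : LamEq s s') (h₂ : LamEq t t')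
    (hs : HasTy s .base) (ht : HasTy t .base) : LamEq (orTm s t) (orTm s' t') :=
  (h₁.imp h₂ hs ht).imp h₂ (hasTy_imp hs ht) ht

theorem LamEq.and {s s' t t' : Tm} (h₁ : LamEq s s') (h₂ : LamEq t t')
    (hs : HasTy s .base) (ht : HasTy t .base) : LamEq (andTm s t) (andTm s' t') :=
  ((h₁.neg hs).or (h₂.neg ht) (hasTy_neg hs) (hasTy_neg ht)).neg
    (hasTy_or (hasTy_neg hs) (hasTy_neg ht))

theorem LamEq.andList_of_forall₂ : ∀ {l l' : List Tm}, List.Forall₂ LamEq l l' →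
    (∀ u ∈ l, HasTy u .base) → LamEq (andList l) (andList l')
  | _, _, .nil, _ => LamEq.refl hasTy_top
  | _, _, .cons h .nil, _ => h
  | s :: _ :: _, _, .cons h (.cons h' hl), hty => by
      have hty' : ∀ u ∈ _ :: _, HasTy u .base := fun u hu => hty u (List.mem_cons_of_mem s hu)
      rw [andList_cons_cons, andList_cons_cons]
      exact h.and (LamEq.andList_of_forall₂ (.cons h' hl) hty') (hty s (by simp))
        (hasTy_andList hty')

theorem LamEq.orList_of_forall₂ : ∀ {l l' : List Tm}, List.Forall₂ LamEq l l' →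
    (∀ u ∈ l, HasTy u .base) → LamEq (orList l) (orList l')
  | _, _, .nil, _ => LamEq.refl hasTy_bot
  | _, _, .cons h .nil, _ => h
  | s :: _ :: _, _, .cons h (.cons h' hl), hty => by
      have hty' : ∀ u ∈ _ :: _, HasTy u .base := fun u hu => hty u (List.mem_cons_of_mem s hu)
      rw [orList_cons_cons, orList_cons_cons]
      exact h.or (LamEq.orList_of_forall₂ (.cons h' hl) hty') (hty s (by simp)) (hasTy_orList hty')

theorem LamEq.andList_map {α : Type} {l : List α} {f g : α → Tm}
    (h : ∀ a ∈ l, LamEq (f a) (g a)) (hf : ∀ a ∈ l, HasTy (f a) .base) :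
    LamEq (andList (l.map f)) (andList (l.map g)) :=
  LamEq.andList_of_forall₂ (List.forall₂_map_left_iff.2 (List.forall₂_map_right_iff.2
    (List.forall₂_same.2 h))) (by simpa using hf)

theorem LamEq.orList_map {α : Type} {l : List α} {f g : α → Tm}
    (h : ∀ a ∈ l, LamEq (f a) (g a)) (hf : ∀ a ∈ l, HasTy (f a) .base) :
    LamEq (orList (l.map f)) (orList (l.map g)) :=
  LamEq.orList_of_forall₂ (List.forall₂_map_left_iff.2 (List.forall₂_map_right_iff.2
    (List.forall₂_same.2 h))) (by simpa using hf)

namespace Ded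

variable {A : Finset Tm} {t u : Tm}

theorem andList_intro (hA : IsFormulaSet A) :
    ∀ {l : List Tm}, (∀ u ∈ l, Ded A u) → Ded A (andList l)
  | [], _ => top hA
  | [s], h => h s (by simp)
  | s :: _ :: _, h => and_intro (h s (by simp))
      (andList_intro hA fun u hu => h u (List.mem_cons_of_mem s hu))

theorem of_andList : ∀ {l : List Tm}, Ded A (andList l) → u ∈ l → Ded A u
  | [_], h, hu => by rwa [List.mem_singleton.1 hu]
  | _ :: _ :: _, h, hu => by
      rcases List.mem_cons.1 hu with rfl | hu
      · exact and_left h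
      · exact of_andList (and_right h) hu

theorem orList_intro (h : Ded A u) :
    ∀ {l : List Tm}, u ∈ l → (∀ v ∈ l, HasTy v .base) → Ded A (orList l)
  | [_], hu, _ => by rwa [List.mem_singleton.1 hu] at h
  | s :: _ :: _, hu, hl => by
      have hl' : ∀ v ∈ _ :: _, HasTy v .base := fun v hv => hl v (List.mem_cons_of_mem s hv)
      rcases List.mem_cons.1 hu with rfl | hu
      · exact or_inl h (hasTy_orList hl')
      · exact or_inr (orList_intro h hu hl') (hl s (by simp))

theorem orList_elim : ∀ {A : Finset Tm} {l : List Tm}, Ded A (orList l) →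
    (∀ u ∈ l, Ded (insert u A) t) → HasTy t .base → Ded A t
  | _, [], h, _, ht => exfalso h ht
  | _, [s], h, hb, _ => cut h (hb s (by simp))
  | A, s :: a :: l, h, hb, ht => by
      have ho := (hasTy_or_iff.1 h.hasTy).2
      refine or_elim h (hb s (by simp)) (orList_elim (triv h.isFormulaSet ho) (fun u hu => ?_) ht)
      have hu' := hb u (List.mem_cons_of_mem s hu)
      exact hu'.mono (Finset.insert_subset_insert _ (Finset.subset_insert _ _))
        ((h.isFormulaSet.insert ho).insert (hu'.isFormulaSet u (Finset.mem_insert_self u A)))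

theorem neg_orList (hA : IsFormulaSet A) {l : List Tm}
    (h : ∀ u ∈ l, Ded (insert u A) botTm) : Ded A (negTm (orList l)) := by
  have ho := hasTy_orList fun u hu => (h u hu).isFormulaSet u (Finset.mem_insert_self u A)
  refine ded (orList_elim (triv hA ho) (fun u hu => ?_) hasTy_bot)
  exact (h u hu).mono (Finset.insert_subset_insert _ (Finset.subset_insert _ _))
    ((hA.insert ho).insert ((h u hu).isFormulaSet u (Finset.mem_insert_self u A)))

end Ded

/-! ### Quotes and the equation formulas `s ≐σ t` -/

-- The equation formula `s ≐σ t`, called `eqFml` in lemma names.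
notation:50 s:51 " ≐[" σ "] " t:51 => Tm.app (Tm.app (eqTm σ) s) t

theorem quote_eq_quoteBodyAux (σ : Ty) (a : σ.sem) :
    quote σ a = quoteBodyAux σ (argData σ) a := by
  cases σ <;> rfl

theorem eqTm_base : eqTm .base = .lam 0 .base (.lam 1 .base (equivTm (vr 0 .base) (vr 1 .base))) :=
  rfl

theorem eqTm_arrow (σ τ : Ty) : eqTm (.arrow σ τ) =
    .lam 0 (.arrow σ τ) (.lam 1 (.arrow σ τ) (.app (allTm σ)
      (.lam 2 σ (.app (vr 0 (.arrow σ τ)) (vr 2 σ) ≐[τ] .app (vr 1 (.arrow σ τ)) (vr 2 σ))))) :=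
  rfl

theorem allTm_eq (σ : Ty) : allTm σ = .lam 0 (.arrow σ .base)
    (andList ((Finset.univ : Finset σ.sem).toList.map
      fun a => .app (vr 0 (.arrow σ .base)) (quote σ a))) :=
  rfl

theorem eqConj_argData_arrow {σ τ : Ty} {k : ℕ} {b : Tup (Ty.arrow σ τ).args} :
    eqConj (Ty.arrow σ τ).args (argData (.arrow σ τ)) k b =
      (vr k σ ≐[σ] quote σ b.1) :: eqConj τ.args (argData τ) (k + 1) b.2 :=
  rfl

def mkLamsVars : List Ty → ℕ → Finset (ℕ × Ty)
  | [], _ => ∅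
  | σ :: l, k => insert (k, σ) (mkLamsVars l (k + 1))

theorem fv_mkLams_subset (l : List Ty) (k : ℕ) (body : Tm) :
    fv (mkLams l k body) ⊆ fv body \ mkLamsVars l k := by
  induction l generalizing k with
  | nil => simp [mkLams, mkLamsVars]
  | cons σ l ih =>
      intro q hq
      simp only [mkLams, fv_lam, Finset.mem_erase] at hq
      have := ih (k + 1) hq.2
      simp only [Finset.mem_sdiff, mkLamsVars, Finset.mem_insert, not_or] at this ⊢
      exact ⟨this.1, hq.1, this.2⟩

theorem hasTy_mkLams : ∀ (σ : Ty) (k : ℕ) {body : Tm}, HasTy body .base →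
    HasTy (mkLams σ.args k body) σ
  | .base, _, _, h => h
  | .arrow _ τ, k, _, h => .lam (hasTy_mkLams τ (k + 1) h)

def QuoteFacts (σ : Ty) : Prop :=
  (∀ a, HasTy (quote σ a) σ ∧ Closed (quote σ a)) ∧
    HasTy (eqTm σ) (.arrow σ (.arrow σ .base)) ∧ Closed (eqTm σ)

theorem eqConj_argData_facts {σ : Ty} (h : ∀ υ ∈ σ.args, QuoteFacts υ) (k : ℕ)
    (b : Tup σ.args) :
    ∀ u ∈ eqConj σ.args (argData σ) k b, HasTy u .base ∧ fv u ⊆ mkLamsVars σ.args k := by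
  induction σ generalizing k with
  | base => simp [Ty.args, eqConj]
  | arrow σ τ _ ih =>
      rw [eqConj_argData_arrow]
      obtain ⟨hq, heq, hceq⟩ := h σ (by simp [Ty.args])
      intro u hu
      rcases List.mem_cons.1 hu with rfl | hu
      · refine ⟨.app (.app heq hasTy_vr) (hq b.1).1, ?_⟩
        have hcq : fv (quote σ b.1) = ∅ := (hq b.1).2
        simp [hceq.fv_eq, hcq, Ty.args, mkLamsVars]
      · obtain ⟨h₁, h₂⟩ := ih (fun υ hυ => h υ (List.mem_cons_of_mem σ hυ)) (k + 1) b.2 u hu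
        exact ⟨h₁, h₂.trans (Finset.subset_insert _ _)⟩

theorem quote_facts_of_args {σ : Ty} (h : ∀ υ ∈ σ.args, QuoteFacts υ) (a : σ.sem) :
    HasTy (quote σ a) σ ∧ Closed (quote σ a) := by
  have hconj := eqConj_argData_facts h 0
  rw [quote_eq_quoteBodyAux, quoteBodyAux]
  refine ⟨hasTy_mkLams σ 0 (hasTy_orList ?_), Finset.eq_empty_of_forall_notMem fun q hq => ?_⟩
  · simp only [List.mem_map]
    rintro _ ⟨b, -, rfl⟩
    exact hasTy_andList fun v hv => (hconj b v hv).1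
  · obtain ⟨hq, hqvars⟩ := Finset.mem_sdiff.1 (fv_mkLams_subset _ _ _ hq)
    refine hqvars (fv_orList_subset (fun u hu => ?_) hq)
    obtain ⟨b, -, rfl⟩ := List.mem_map.1 hu
    exact fv_andList_subset fun v hv => (hconj b v hv).2

theorem allTm_facts {σ : Ty} (hq : ∀ a, HasTy (quote σ a) σ ∧ Closed (quote σ a)) :
    HasTy (allTm σ) (.arrow (.arrow σ .base) .base) ∧ Closed (allTm σ) := by
  rw [allTm_eq]
  refine ⟨.lam (hasTy_andList fun u hu => ?_), Finset.eq_empty_of_forall_notMem fun p hp => ?_⟩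
  · obtain ⟨a, -, rfl⟩ := List.mem_map.1 hu
    exact .app hasTy_vr (hq a).1
  · rw [fv_lam, Finset.mem_erase] at hp
    refine hp.1 (Finset.mem_singleton.1 (fv_andList_subset (fun u hu => ?_) hp.2))
    obtain ⟨a, -, rfl⟩ := List.mem_map.1 hu
    simp [(hq a).2.fv_eq]

theorem quoteFacts_and_args : ∀ σ : Ty, QuoteFacts σ ∧ ∀ υ ∈ σ.args, QuoteFacts υ
  | .base =>
      have hargs : ∀ υ ∈ Ty.base.args, QuoteFacts υ := by simp [Ty.args]
      ⟨⟨quote_facts_of_args hargs, .lam (.lam (hasTy_equiv hasTy_vr hasTy_vr)),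
        by simp [Closed, eqTm_base, equivTm, andTm, orTm, negTm, impTm]⟩, hargs⟩
  | .arrow σ τ =>
      have hσ := (quoteFacts_and_args σ).1
      have hτ := quoteFacts_and_args τ
      have hall := allTm_facts hσ.1
      have hargs : ∀ υ ∈ (Ty.arrow σ τ).args, QuoteFacts υ := by
        simpa [Ty.args] using ⟨hσ, hτ.2⟩
      ⟨⟨quote_facts_of_args hargs,
        by rw [eqTm_arrow]; exact .lam (.lam (.app hall.1 (.lam
          (.app (.app hτ.1.2.1 (.app hasTy_vr hasTy_vr)) (.app hasTy_vr hasTy_vr))))),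
        by
          simp only [Closed, eqTm_arrow, fv_lam, fv_app, hall.2.fv_eq, hτ.1.2.2.fv_eq, fv_vr,
            Finset.eq_empty_iff_forall_notMem]
          simp only [Finset.mem_erase, Finset.mem_union, Finset.mem_singleton]
          tauto⟩, hargs⟩

theorem hasTy_quote {σ : Ty} (a : σ.sem) : HasTy (quote σ a) σ :=
  ((quoteFacts_and_args σ).1.1 a).1

theorem closed_quote {σ : Ty} (a : σ.sem) : Closed (quote σ a) :=
  ((quoteFacts_and_args σ).1.1 a).2

theorem hasTy_eqTm (σ : Ty) : HasTy (eqTm σ) (.arrow σ (.arrow σ .base)) :=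
  (quoteFacts_and_args σ).1.2.1

theorem closed_eqTm (σ : Ty) : Closed (eqTm σ) := (quoteFacts_and_args σ).1.2.2

theorem hasTy_allTm (σ : Ty) : HasTy (allTm σ) (.arrow (.arrow σ .base) .base) :=
  (allTm_facts fun a => ⟨hasTy_quote a, closed_quote a⟩).1

theorem closed_allTm (σ : Ty) : Closed (allTm σ) :=
  (allTm_facts fun a => ⟨hasTy_quote a, closed_quote a⟩).2

theorem hasTy_eqFml {σ : Ty} {s t : Tm} (hs : HasTy s σ) (ht : HasTy t σ) :
    HasTy (s ≐[σ] t) .base :=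
  .app (.app (hasTy_eqTm σ) hs) ht

theorem lamEq_substAux_eqFml {ρ : ℕ × Ty → Tm} (hρ : IsSubstitution ρ) {σ : Ty} {s t : Tm}
    (hs : HasTy s σ) (ht : HasTy t σ) :
    LamEq (substAux ρ (s ≐[σ] t)) (substAux ρ s ≐[σ] substAux ρ t) := by
  have hs' := hs.substAux_of_isSubstitution hρ
  have he := (hasTy_eqTm σ).substAux_of_isSubstitution hρ
  exact (((closed_eqTm σ).lamEq_substAux (hasTy_eqTm σ) ρ).app_left (.app he hs')).app_left
    (.app (.app he hs') (ht.substAux_of_isSubstitution hρ))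

theorem eqFml_base_lamEq {u v : Tm} (hu : HasTy u .base) (hv : HasTy v .base) :
    LamEq (u ≐[.base] v) (equivTm u v) := by
  rw [eqTm_base]
  convert lamEq_app_app_lam_lam (hasTy_equiv hasTy_vr hasTy_vr) hu hv using 1
  simp [Function.update_of_ne]

theorem allTm_app_lamEq {σ : Ty} {F : Tm} (hF : HasTy F (.arrow σ .base)) :
    LamEq (.app (allTm σ) F)
      (andList ((Finset.univ : Finset σ.sem).toList.map fun a => .app F (quote σ a))) := by
  have hθ := isSubstitution_idSub.update (n := 0) hF
  have hβ := LamEq.beta (.app (hasTy_allTm σ) hF)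
  rw [allTm_eq]
  simp only [subst, substAux_andList, List.map_map, Function.comp_def, substAux_app, substAux_vr,
    Function.update_self] at hβ
  refine hβ.trans (LamEq.andList_map (fun a _ => ?_) fun a _ => ?_)
  · exact ((closed_quote a).lamEq_substAux (hasTy_quote a) _).app_right
      (.app hF ((hasTy_quote a).substAux_of_isSubstitution hθ))
  · exact .app hF ((hasTy_quote a).substAux_of_isSubstitution hθ)

theorem eqFml_arrow_lamEq {σ τ : Ty} {u v : Tm} (hu : HasTy u (.arrow σ τ))
    (hv : HasTy v (.arrow σ τ)) :
    LamEq (u ≐[.arrow σ τ] v) (andList ((Finset.univ : Finset σ.sem).toList.map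
      fun a => .app u (quote σ a) ≐[τ] .app v (quote σ a))) := by
  set body := .app (vr 0 (.arrow σ τ)) (vr 2 σ) ≐[τ] .app (vr 1 (.arrow σ τ)) (vr 2 σ)
  set ρ := Function.update (Function.update idSub (0, .arrow σ τ) u) (1, .arrow σ τ) v
  have hρ : IsSubstitution ρ := (isSubstitution_idSub.update hu).update hv
  have hbody : HasTy body .base := hasTy_eqFml (.app hasTy_vr hasTy_vr) (.app hasTy_vr hasTy_vr)
  have hK : HasTy (substAux ρ (.lam 2 σ body)) (.arrow σ .base) :=
    (HasTy.lam hbody).substAux_of_isSubstitution hρ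
  have h₁ : LamEq (u ≐[.arrow σ τ] v) (.app (allTm σ) (substAux ρ (.lam 2 σ body))) := by
    rw [eqTm_arrow]
    refine (lamEq_app_app_lam_lam (.app (hasTy_allTm σ) (.lam hbody)) hu hv).trans ?_
    rw [substAux_app]
    exact ((closed_allTm σ).lamEq_substAux (hasTy_allTm σ) ρ).app_left
      (.app ((hasTy_allTm σ).substAux_of_isSubstitution hρ) hK)
  refine (h₁.trans (allTm_app_lamEq hK)).trans
    (LamEq.andList_map (fun a _ => ?_) fun a _ => .app hK (hasTy_quote a))
  have hρa := hρ.update (n := 2) (hasTy_quote a)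
  refine (lamEq_app_substAux_lam hρ hbody (hasTy_quote a)).trans ?_
  convert lamEq_substAux_eqFml hρa (.app hasTy_vr hasTy_vr) (.app hasTy_vr hasTy_vr) using 2 <;>
    simp [ρ, Function.update_of_ne]

theorem quote_base_false : quote .base false = botTm := by
  refine (quote_eq_quoteBodyAux .base _).trans ?_
  unfold quoteBodyAux
  simp [Ty.applyTup, Ty.args, mkLams, orList]

theorem quote_base_true : quote .base true = topTm := by
  refine (quote_eq_quoteBodyAux .base _).trans ?_
  unfold quoteBodyAux
  have h : (Finset.univ : Finset (Tup Ty.base.args)).toList = [PUnit.unit] := by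
    rw [show (Finset.univ : Finset (Tup Ty.base.args)) = {PUnit.unit} from
      Finset.eq_singleton_iff_unique_mem.2 ⟨Finset.mem_univ _, fun _ _ => rfl⟩]
    exact Finset.toList_singleton _
  simp only [Ty.applyTup, h]
  rfl

def appList : Tm → List Tm → Tm
  | t, [] => t
  | t, u :: l => appList (.app t u) l

noncomputable def quoteArgs : (σ : Ty) → Tup σ.args → List Tm
  | .base, _ => []
  | .arrow σ τ, c => quote σ c.1 :: quoteArgs τ c.2

/-- `↓g ↓c₁ … ↓cₙ`. -/
noncomputable def appQuotes (σ : Ty) (g : σ.sem) (c : Tup σ.args) : Tm :=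
  appList (quote σ g) (quoteArgs σ c)

/-- `ρ` updated to send the variables bound by `mkLams σ.args k` to the quotes of `c`. -/
noncomputable def updArgs (ρ : ℕ × Ty → Tm) (k : ℕ) : (σ : Ty) → Tup σ.args → ℕ × Ty → Tm
  | .base, _ => ρ
  | .arrow σ τ, c => updArgs (Function.update ρ (k, σ) (quote σ c.1)) (k + 1) τ c.2

noncomputable def eqQuotes : (σ : Ty) → Tup σ.args → Tup σ.args → List Tm
  | .base, _, _ => []
  | .arrow σ τ, c, b => (quote σ c.1 ≐[σ] quote σ b.1) :: eqQuotes τ c.2 b.2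

theorem IsSubstitution.updArgs {ρ : ℕ × Ty → Tm} (hρ : IsSubstitution ρ) (k : ℕ) (σ : Ty)
    (c : Tup σ.args) : IsSubstitution (PTT.updArgs ρ k σ c) := by
  induction σ generalizing ρ k with
  | base => exact hρ
  | arrow σ τ _ ih => exact ih (hρ.update (hasTy_quote c.1)) (k + 1) c.2

theorem updArgs_of_lt {ρ : ℕ × Ty → Tm} {k : ℕ} {σ : Ty} {c : Tup σ.args} {p : ℕ × Ty}
    (hp : p.1 < k) : updArgs ρ k σ c p = ρ p := by
  induction σ generalizing ρ k with
  | base => rfl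
  | arrow σ τ _ ih =>
      rw [updArgs, ih (by omega), Function.update_of_ne]
      rintro rfl
      exact lt_irrefl _ hp

theorem exists_hasTy_of_hasTy_appList {s : Tm} {l : List Tm} {σ : Ty}
    (h : HasTy (appList s l) σ) : ∃ υ, HasTy s υ := by
  induction l generalizing s with
  | nil => exact ⟨σ, h⟩
  | cons u l ih =>
      obtain ⟨υ, hυ⟩ := ih h
      cases hυ with | app hs _ => exact ⟨_, hs⟩

theorem LamEq.appList {s t : Tm} (h : LamEq s t) {l : List Tm} {σ : Ty}
    (hty : HasTy (PTT.appList s l) σ) : LamEq (PTT.appList s l) (PTT.appList t l) := by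
  induction l generalizing s t with
  | nil => exact h
  | cons u l ih =>
      obtain ⟨υ, hυ⟩ := exists_hasTy_of_hasTy_appList (l := l) hty
      exact ih (h.app_left hυ) hty

theorem HasTy.appList_quoteArgs {s : Tm} {σ : Ty} (h : HasTy s σ) (c : Tup σ.args) :
    HasTy (appList s (quoteArgs σ c)) .base := by
  induction σ generalizing s with
  | base => exact h
  | arrow σ τ _ ih => exact ih (.app h (hasTy_quote c.1)) c.2

theorem hasTy_appQuotes {σ : Ty} (g : σ.sem) (c : Tup σ.args) : HasTy (appQuotes σ g c) .base :=
  (hasTy_quote g).appList_quoteArgs c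

theorem lamEq_appList_substAux_mkLams {body : Tm} (hbody : HasTy body .base) {σ : Ty}
    (c : Tup σ.args) {k : ℕ} {ρ : ℕ × Ty → Tm} (hρ : IsSubstitution ρ) :
    LamEq (appList (substAux ρ (mkLams σ.args k body)) (quoteArgs σ c))
      (substAux (updArgs ρ k σ c) body) := by
  induction σ generalizing k ρ with
  | base => exact LamEq.refl (hbody.substAux_of_isSubstitution hρ)
  | arrow σ τ _ ih =>
      have hβ := lamEq_app_substAux_lam (n := k) hρ (hasTy_mkLams τ (k + 1) hbody)
        (hasTy_quote c.1)
      have hty :=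
        ((hasTy_mkLams (.arrow σ τ) k hbody).substAux_of_isSubstitution hρ).appList_quoteArgs c
      exact (hβ.appList hty).trans (ih c.2 (hρ.update (hasTy_quote c.1)))

theorem forall₂_substAux_eqConj_argData {ρ : ℕ × Ty → Tm} (hρ : IsSubstitution ρ) {σ : Ty}
    (k : ℕ) (c b : Tup σ.args) :
    List.Forall₂ LamEq ((eqConj σ.args (argData σ) k b).map (substAux (updArgs ρ k σ c)))
      (eqQuotes σ c b) := by
  induction σ generalizing ρ k with
  | base => exact .nil
  | arrow σ τ _ ih =>
      rw [eqConj_argData_arrow, List.map_cons]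
      refine .cons ?_ (ih (hρ.update (hasTy_quote c.1)) (k + 1) c.2 b.2)
      have hρ' := hρ.updArgs k (.arrow σ τ) c
      have hk : substAux (updArgs ρ k (.arrow σ τ) c) (vr k σ) = quote σ c.1 := by
        simp [updArgs, updArgs_of_lt]
      refine (lamEq_substAux_eqFml hρ' hasTy_vr (hasTy_quote b.1)).trans ?_
      rw [hk]
      exact ((closed_quote b.1).lamEq_substAux (hasTy_quote b.1) _).app_right
        (hasTy_eqFml (hasTy_quote c.1) ((hasTy_quote b.1).substAux_of_isSubstitution hρ'))

theorem hasTy_eqQuotes {σ : Ty} (c b : Tup σ.args) : ∀ u ∈ eqQuotes σ c b, HasTy u .base := by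
  induction σ with
  | base => simp [eqQuotes]
  | arrow σ τ _ ih =>
      intro u hu
      rcases List.mem_cons.1 hu with rfl | hu
      · exact hasTy_eqFml (hasTy_quote c.1) (hasTy_quote b.1)
      · exact ih c.2 b.2 u hu

theorem appQuotes_lamEq (σ : Ty) (g : σ.sem) (c : Tup σ.args) :
    LamEq (appQuotes σ g c)
      (orList (((Finset.univ : Finset (Tup σ.args)).toList.filter (σ.applyTup g ·)).map
        fun b => andList (eqQuotes σ c b))) := by
  set L := (Finset.univ : Finset (Tup σ.args)).toList.filter (σ.applyTup g ·)
  have hconj b : ∀ v ∈ eqConj σ.args (argData σ) 0 b, HasTy v .base := fun v hv =>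
    (eqConj_argData_facts (fun υ _ => (quoteFacts_and_args υ).1) 0 b v hv).1
  have hθ := isSubstitution_idSub.updArgs 0 σ c
  have hbody : HasTy (orList (L.map fun b => andList (eqConj σ.args (argData σ) 0 b))) .base :=
    hasTy_orList fun u hu => by
      obtain ⟨b, -, rfl⟩ := List.mem_map.1 hu
      exact hasTy_andList (hconj b)
  have hq : quote σ g = mkLams σ.args 0
      (orList (L.map fun b => andList (eqConj σ.args (argData σ) 0 b))) :=
    quote_eq_quoteBodyAux σ g
  have h₀ : LamEq (appQuotes σ g c) (appList (substAux idSub (quote σ g)) (quoteArgs σ c)) :=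
    (lamEq_substAux_of_eqOn (hasTy_quote g) fun _ _ => rfl).symm.appList (hasTy_appQuotes g c)
  rw [hq] at h₀
  refine (h₀.trans (lamEq_appList_substAux_mkLams hbody c isSubstitution_idSub)).trans ?_
  rw [substAux_orList, List.map_map]
  refine LamEq.orList_map (fun b _ => ?_) fun b _ =>
    (hasTy_andList (hconj b)).substAux_of_isSubstitution hθ
  rw [Function.comp_apply, substAux_andList]
  exact LamEq.andList_of_forall₂ (forall₂_substAux_eqConj_argData isSubstitution_idSub 0 c b)
    fun u hu => by
      obtain ⟨v, hv, rfl⟩ := List.mem_map.1 hu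
      exact (hconj b v hv).substAux_of_isSubstitution hθ

/-! ### Extensionality and ground formulas -/

theorem Ded.equiv_refl {A : Finset Tm} (hA : IsFormulaSet A) {s : Tm} (hs : HasTy s .base) :
    Ded A (equivTm s s) :=
  and_intro (ded (triv hA hs)) (ded (triv hA hs))

theorem Ded.eqFml_of_forall {A : Finset Tm} (hA : IsFormulaSet A) {σ : Ty} {u v : Tm}
    (hu : HasTy u σ) (hv : HasTy v σ)
    (h : ∀ c : Tup σ.args,
      Ded A (equivTm (appList u (quoteArgs σ c)) (appList v (quoteArgs σ c)))) :
    Ded A (u ≐[σ] v) := by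
  induction σ generalizing u v with
  | base => exact (h PUnit.unit).lamEq (eqFml_base_lamEq hu hv).symm
  | arrow σ τ _ ih =>
      refine (Ded.andList_intro hA fun w hw => ?_).lamEq (eqFml_arrow_lamEq hu hv).symm
      obtain ⟨a, -, rfl⟩ := List.mem_map.1 hw
      exact ih (.app hu (hasTy_quote a)) (.app hv (hasTy_quote a)) fun c => h (a, c)

theorem Ded.equiv_of_eqFml {A : Finset Tm} {σ : Ty} {u v : Tm} (h : Ded A (u ≐[σ] v))
    (hu : HasTy u σ) (hv : HasTy v σ) (c : Tup σ.args) :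
    Ded A (equivTm (appList u (quoteArgs σ c)) (appList v (quoteArgs σ c))) := by
  induction σ generalizing u v with
  | base => exact h.lamEq (eqFml_base_lamEq hu hv)
  | arrow σ τ _ ih =>
      exact ih ((h.lamEq (eqFml_arrow_lamEq hu hv)).of_andList (List.mem_map.2 ⟨c.1, by simp, rfl⟩))
        (.app hu (hasTy_quote c.1)) (.app hv (hasTy_quote c.1)) c.2

theorem Ded.eqFml_refl {A : Finset Tm} (hA : IsFormulaSet A) {σ : Ty} {s : Tm}
    (hs : HasTy s σ) : Ded A (s ≐[σ] s) :=
  eqFml_of_forall hA hs hs fun c => equiv_refl hA (hs.appList_quoteArgs c)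

theorem Ty.exists_applyTup_ne {σ : Ty} {a b : σ.sem} (h : a ≠ b) :
    ∃ c : Tup σ.args, σ.applyTup a c ≠ σ.applyTup b c := by
  induction σ with
  | base => exact ⟨PUnit.unit, h⟩
  | arrow σ τ _ ih =>
      obtain ⟨x, hx⟩ := Function.ne_iff.1 h
      obtain ⟨c, hc⟩ := ih hx
      exact ⟨(x, c), hc⟩

def QuotesDistinct (σ : Ty) : Prop :=
  ∀ a b : σ.sem, a ≠ b → Ded ∅ (negTm (quote σ a ≐[σ] quote σ b))

theorem Ded.eqQuotes_self {σ : Ty} (c : Tup σ.args) : ∀ u ∈ eqQuotes σ c c, Ded ∅ u := by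
  induction σ with
  | base => simp [eqQuotes]
  | arrow σ τ _ ih =>
      intro u hu
      rcases List.mem_cons.1 hu with rfl | hu
      · exact eqFml_refl isFormulaSet_empty (hasTy_quote c.1)
      · exact ih c.2 u hu

theorem Ded.bot_of_andList_eqQuotes {σ : Ty} (hdis : ∀ υ ∈ σ.args, QuotesDistinct υ)
    {A : Finset Tm} {c b : Tup σ.args} (hbc : b ≠ c) (h : Ded A (andList (eqQuotes σ c b))) :
    Ded A botTm := by
  induction σ with
  | base => exact absurd rfl hbc
  | arrow σ τ _ ih =>
      by_cases h₁ : b.1 = c.1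
      · refine ih (fun υ hυ => hdis υ (List.mem_cons_of_mem σ hυ)) (fun h₂ => hbc (Prod.ext h₁ h₂))
          (andList_intro h.isFormulaSet fun u hu => h.of_andList (List.mem_cons_of_mem _ hu))
      · exact mp ((hdis σ List.mem_cons_self c.1 b.1 (Ne.symm h₁)).of_empty h.isFormulaSet)
          (h.of_andList List.mem_cons_self)

theorem Ded.appQuotes_of_applyTup {σ : Ty} {g : σ.sem} {c : Tup σ.args}
    (h : σ.applyTup g c = true) : Ded ∅ (appQuotes σ g c) := by
  refine (orList_intro (andList_intro isFormulaSet_empty (eqQuotes_self c)) ?_ ?_).lamEq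
    (appQuotes_lamEq σ g c).symm
  · exact List.mem_map.2 ⟨c, List.mem_filter.2 ⟨by simp, h⟩, rfl⟩
  · simp only [List.mem_map]
    rintro _ ⟨b, -, rfl⟩
    exact hasTy_andList (hasTy_eqQuotes c b)

theorem Ded.neg_appQuotes_of_applyTup {σ : Ty} (hdis : ∀ υ ∈ σ.args, QuotesDistinct υ)
    {g : σ.sem} {c : Tup σ.args} (h : σ.applyTup g c = false) :
    Ded ∅ (negTm (appQuotes σ g c)) := by
  refine (neg_orList isFormulaSet_empty fun u hu => ?_).lamEq
    ((appQuotes_lamEq σ g c).neg (hasTy_appQuotes g c)).symm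
  obtain ⟨b, hb, rfl⟩ := List.mem_map.1 hu
  have hbc : b ≠ c := by
    rintro rfl
    simp [h] at hb
  exact bot_of_andList_eqQuotes hdis hbc
    (triv isFormulaSet_empty (hasTy_andList (hasTy_eqQuotes c b)))

theorem quotesDistinct_of_args {σ : Ty} (hdis : ∀ υ ∈ σ.args, QuotesDistinct υ) :
    QuotesDistinct σ := by
  intro a b hab
  obtain ⟨c, hc⟩ := Ty.exists_applyTup_ne hab
  have hE := hasTy_eqFml (hasTy_quote a) (hasTy_quote b)
  have hA := isFormulaSet_empty.insert hE
  have hequiv := (Ded.triv isFormulaSet_empty hE).equiv_of_eqFml (hasTy_quote a) (hasTy_quote b) c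
  refine Ded.ded ?_
  cases ha : σ.applyTup a c <;> cases hb : σ.applyTup b c <;>
    simp only [ha, hb, ne_eq, not_true_eq_false] at hc
  · exact .mp ((Ded.neg_appQuotes_of_applyTup hdis ha).of_empty hA)
      (hequiv.equiv_mpr ((Ded.appQuotes_of_applyTup hb).of_empty hA))
  · exact .mp ((Ded.neg_appQuotes_of_applyTup hdis hb).of_empty hA)
      (hequiv.equiv_mp ((Ded.appQuotes_of_applyTup ha).of_empty hA))

theorem quotesDistinct_and_args : ∀ σ : Ty, QuotesDistinct σ ∧ ∀ υ ∈ σ.args, QuotesDistinct υ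
  | .base => ⟨quotesDistinct_of_args (by simp [Ty.args]), by simp [Ty.args]⟩
  | .arrow σ τ =>
      have hargs : ∀ υ ∈ (Ty.arrow σ τ).args, QuotesDistinct υ := by
        simpa [Ty.args] using ⟨(quotesDistinct_and_args σ).1, (quotesDistinct_and_args τ).2⟩
      ⟨quotesDistinct_of_args hargs, hargs⟩

theorem Ded.neg_appQuotes {σ : Ty} {g : σ.sem} {c : Tup σ.args} (h : σ.applyTup g c = false) :
    Ded ∅ (negTm (appQuotes σ g c)) :=
  neg_appQuotes_of_applyTup (quotesDistinct_and_args σ).2 h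

/-! ### `Rep` and `Enum` -/

theorem Ded.eqFml_quote_app {σ τ : Ty} (f : (Ty.arrow σ τ).sem) (a : σ.sem) :
    Ded ∅ (.app (quote (.arrow σ τ) f) (quote σ a) ≐[τ] quote τ (f a)) := by
  refine eqFml_of_forall isFormulaSet_empty (.app (hasTy_quote f) (hasTy_quote a))
    (hasTy_quote (f a)) fun c => ?_
  change Ded ∅ (equivTm (appQuotes (.arrow σ τ) f (a, c)) (appQuotes τ (f a) c))
  cases hv : τ.applyTup (f a) c
  · exact equiv_of_neg (neg_appQuotes hv) (neg_appQuotes hv)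
  · exact equiv_of_ded (appQuotes_of_applyTup hv) (appQuotes_of_applyTup hv)

def Ctx.comp : Ctx → Ctx → Ctx
  | .hole, D => D
  | .lam n σ C, D => .lam n σ (C.comp D)
  | .appL C t, D => .appL (C.comp D) t
  | .appR t C, D => .appR t (C.comp D)

theorem Ctx.fill_comp (C D : Ctx) (s : Tm) : (C.comp D).fill s = C.fill (D.fill s) := by
  induction C <;> simp_all [Ctx.comp, Ctx.fill]

theorem Ctx.captures_comp (C D : Ctx) (p : ℕ × Ty) :
    (C.comp D).captures p ↔ C.captures p ∨ D.captures p := by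
  induction C <;> simp_all [Ctx.comp, Ctx.captures, or_assoc]

theorem RepP.symm {τ : Ty} (hrep : RepP τ) {A : Finset Tm} {s t : Tm} (hs : HasTy s τ)
    (ht : HasTy t τ) (h : Ded A (s ≐[τ] t)) : Ded A (t ≐[τ] s) :=
  hrep A s t (.appL (.appR (eqTm τ) .hole) s) h.isFormulaSet hs ht (fun _ _ hc => hc) h
    (Ded.eqFml_refl h.isFormulaSet hs)

theorem RepP.trans {τ : Ty} (hrep : RepP τ) {A : Finset Tm} {a b c : Tm} (ha : HasTy a τ)
    (hb : HasTy b τ) (h₁ : Ded A (a ≐[τ] b)) (h₂ : Ded A (b ≐[τ] c)) : Ded A (a ≐[τ] c) :=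
  hrep A b a (.appL (.appR (eqTm τ) .hole) c) h₁.isFormulaSet hb ha (fun _ _ hc => hc)
    (hrep.symm ha hb h₁) h₂

/-- `Enum_σ` for arbitrary terms under arbitrary assumptions. -/
def EnumTm (σ : Ty) : Prop :=
  ∀ (A : Finset Tm) (s : Tm), IsFormulaSet A → HasTy s σ →
    Ded A (orList ((Finset.univ : Finset σ.sem).toList.map fun a => quote σ a ≐[σ] s))

theorem repP_base : RepP .base := fun _ _ _ C _ hs ht hadm h hC =>
  Ded.br C hadm (h.lamEq (eqFml_base_lamEq hs ht))
    hC (Ctx.hasTy_fill_of_hasTy_fill hC.hasTy hs ht)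

theorem enumTm_base : EnumTm .base := by
  intro A s hA hs
  have hl : ∀ u ∈ (Finset.univ : Finset Ty.base.sem).toList.map
      (fun a => quote .base a ≐[.base] s), HasTy u .base := by
    simp only [List.mem_map]
    rintro _ ⟨a, -, rfl⟩
    exact hasTy_eqFml (hasTy_quote a) hs
  have hmem (b : Ty.base.sem) : (quote .base b ≐[.base] s) ∈
      (Finset.univ : Finset Ty.base.sem).toList.map (fun a => quote .base a ≐[.base] s) :=
    List.mem_map.2 ⟨b, Finset.mem_toList.2 (Finset.mem_univ b), rfl⟩
  refine Ded.by_cases (s := s) (Ded.orList_intro ?_ (hmem true) hl)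
    (Ded.orList_intro ?_ (hmem false) hl)
  · rw [quote_base_true]
    exact (Ded.equiv_of_ded (Ded.top (hA.insert hs)) (Ded.triv hA hs)).lamEq
      (eqFml_base_lamEq hasTy_top hs).symm
  · rw [quote_base_false]
    exact (Ded.equiv_of_neg (Ded.top (hA.insert (hasTy_neg hs))) (Ded.triv hA (hasTy_neg hs))).lamEq
      (eqFml_base_lamEq hasTy_bot hs).symm

theorem Ded.eqFml_app {σ τ : Ty} (hrep : RepP σ) (henum : EnumTm σ) {A : Finset Tm}
    {s t x : Tm} (h : Ded A (s ≐[.arrow σ τ] t)) (hs : HasTy s (.arrow σ τ))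
    (ht : HasTy t (.arrow σ τ)) (hx : HasTy x σ) : Ded A (.app s x ≐[τ] .app t x) := by
  refine orList_elim (henum A x h.isFormulaSet hx) (fun u hu => ?_)
    (hasTy_eqFml (.app hs hx) (.app ht hx))
  obtain ⟨a, -, rfl⟩ := List.mem_map.1 hu
  have hax := hasTy_eqFml (hasTy_quote a) hx
  have hA := h.isFormulaSet.insert hax
  have hyp := triv h.isFormulaSet hax
  have hsa : Ded (insert (quote σ a ≐[σ] x) A) (.app s (quote σ a) ≐[τ] .app t (quote σ a)) :=
    ((weak hax h).lamEq (eqFml_arrow_lamEq hs ht)).of_andList (List.mem_map.2 ⟨a, by simp, rfl⟩)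
  have hxa := hrep _ _ _ (.appL (.appR (eqTm τ) (.appR s .hole)) (.app t (quote σ a))) hA
    (hasTy_quote a) hx (fun _ _ hc => hc) hyp hsa
  exact hrep _ _ _ (.appR (.app (eqTm τ) (.app s x)) (.appR t .hole)) hA (hasTy_quote a) hx
    (fun _ _ hc => hc) hyp hxa

theorem repP_arrow {σ τ : Ty} (hrepσ : RepP σ) (henumσ : EnumTm σ) (hrepτ : RepP τ) :
    RepP (.arrow σ τ) := by
  intro A s t C hA hs ht hadm hEq hCs
  set x := (A.biUnion fv ∪ fv s ∪ fv t).sup Prod.fst + 1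
  have hx := fresh_not_mem (A.biUnion fv ∪ fv s ∪ fv t) σ
  simp only [Finset.mem_union, not_or] at hx
  have hηs : LamEq (.lam x σ (.app s (vr x σ))) s := LamEq.eta (.lam (.app hs hasTy_vr)) hx.1.2
  have hηt : LamEq (.lam x σ (.app t (vr x σ))) t := LamEq.eta (.lam (.app ht hasTy_vr)) hx.2
  have hadm' : (C.comp (.lam x σ .hole)).Admissible A := fun p hp hc => by
    rcases (Ctx.captures_comp _ _ _).1 hc with hc | rfl | hc
    · exact hadm p hp hc
    · exact hx.1.1 hp
    · exact hc
  have hCs' : Ded A ((C.comp (.lam x σ .hole)).fill (.app s (vr x σ))) := by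
    rw [Ctx.fill_comp]
    exact hCs.lamEq (LamEq.ctx C hηs.symm hCs.hasTy)
  have hCt' := hrepτ A _ _ _ hA (.app hs hasTy_vr) (.app ht hasTy_vr) hadm'
    (hEq.eqFml_app hrepσ henumσ hs ht hasTy_vr) hCs'
  rw [Ctx.fill_comp] at hCt'
  exact hCt'.lamEq (LamEq.ctx C hηt hCt'.hasTy)

theorem hasTy_andList_graph {σ τ : Ty} {s : Tm} (hs : HasTy s (.arrow σ τ)) (L : List σ.sem)
    (f : (Ty.arrow σ τ).sem) :
    HasTy (andList (L.map fun a => quote τ (f a) ≐[τ] .app s (quote σ a))) .base :=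
  hasTy_andList fun u hu => by
    obtain ⟨a, -, rfl⟩ := List.mem_map.1 hu
    exact hasTy_eqFml (hasTy_quote _) (.app hs (hasTy_quote a))

theorem Ded.orList_andList_graph {σ τ : Ty} (henum : EnumTm τ) {A : Finset Tm}
    (hA : IsFormulaSet A) {s : Tm} (hs : HasTy s (.arrow σ τ)) (L : List σ.sem) (hL : L.Nodup) :
    Ded A (orList ((Finset.univ : Finset (Ty.arrow σ τ).sem).toList.map fun f =>
      andList (L.map fun a => quote τ (f a) ≐[τ] .app s (quote σ a)))) := by
  classical
  have hty := hasTy_andList_graph hs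
  have htys : ∀ L : List σ.sem, ∀ u ∈ (Finset.univ : Finset (Ty.arrow σ τ).sem).toList.map
      (fun f => andList (L.map fun a => quote τ (f a) ≐[τ] .app s (quote σ a))),
      HasTy u .base := fun L u hu => by
    obtain ⟨f, -, rfl⟩ := List.mem_map.1 hu
    exact hty L f
  induction L with
  | nil => exact orList_intro (top hA) (List.mem_map.2 ⟨default, by simp, rfl⟩) (htys [])
  | cons a L ih =>
      obtain ⟨haL, hL⟩ := List.nodup_cons.1 hL
      refine orList_elim (ih hL) (fun u hu => ?_) (hasTy_orList (htys _))
      obtain ⟨f, -, rfl⟩ := List.mem_map.1 hu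
      have hA₁ := hA.insert (hty L f)
      refine orList_elim (henum _ _ hA₁ (.app hs (hasTy_quote a))) (fun v hv => ?_)
        (hasTy_orList (htys _))
      obtain ⟨b, -, rfl⟩ := List.mem_map.1 hv
      have hA₂ := hA₁.insert (hasTy_eqFml (hasTy_quote b) (.app hs (hasTy_quote a)))
      let g : (Ty.arrow σ τ).sem := Function.update (β := fun _ => τ.sem) f a b
      refine orList_intro (andList_intro hA₂ fun w hw => ?_)
        (List.mem_map.2 ⟨g, by simp, rfl⟩) (htys _)
      obtain ⟨x, hx, rfl⟩ := List.mem_map.1 hw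
      rcases List.mem_cons.1 hx with rfl | hxL
      · rw [show g x = b from Function.update_self ..]
        exact of_mem hA₂ (Finset.mem_insert_self _ _)
      · rw [show g x = f x from Function.update_of_ne (by rintro rfl; exact haL hxL) ..]
        exact (of_mem hA₂ (Finset.mem_insert_of_mem (Finset.mem_insert_self _ _))).of_andList
          (List.mem_map.2 ⟨x, hxL, rfl⟩)

theorem enumTm_arrow {σ τ : Ty} (hrepτ : RepP τ) (henumτ : EnumTm τ) :
    EnumTm (.arrow σ τ) := by
  intro A s hA hs
  have hgoal : ∀ u ∈ (Finset.univ : Finset (Ty.arrow σ τ).sem).toList.map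
      (fun f => quote (.arrow σ τ) f ≐[.arrow σ τ] s), HasTy u .base := fun u hu => by
    obtain ⟨f, -, rfl⟩ := List.mem_map.1 hu
    exact hasTy_eqFml (hasTy_quote f) hs
  refine Ded.orList_elim (Ded.orList_andList_graph henumτ hA hs _
    (Finset.nodup_toList (Finset.univ : Finset σ.sem)))
    (fun u hu => ?_) (hasTy_orList hgoal)
  obtain ⟨f, -, rfl⟩ := List.mem_map.1 hu
  have hgraph := Ded.triv hA (hasTy_andList_graph hs (Finset.univ : Finset σ.sem).toList f)
  refine Ded.orList_intro ?_ (List.mem_map.2 ⟨f, by simp, rfl⟩) hgoal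
  refine (Ded.andList_intro hgraph.isFormulaSet fun w hw => ?_).lamEq
    (eqFml_arrow_lamEq (hasTy_quote f) hs).symm
  obtain ⟨a, -, rfl⟩ := List.mem_map.1 hw
  exact hrepτ.trans (.app (hasTy_quote f) (hasTy_quote a)) (hasTy_quote (f a))
    ((Ded.eqFml_quote_app f a).of_empty hgraph.isFormulaSet)
    (hgraph.of_andList (List.mem_map.2 ⟨a, by simp, rfl⟩))

theorem repP_and_enumTm : ∀ σ : Ty, RepP σ ∧ EnumTm σ
  | .base => ⟨repP_base, enumTm_base⟩
  | .arrow σ τ =>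
      have hσ := repP_and_enumTm σ
      have hτ := repP_and_enumTm τ
      ⟨repP_arrow hσ.1 hσ.2 hτ.1, enumTm_arrow hτ.1 hτ.2⟩

theorem repP (σ : Ty) : RepP σ := (repP_and_enumTm σ).1

theorem enumTm (σ : Ty) : EnumTm σ := (repP_and_enumTm σ).2

/-! ### Completeness -/

theorem eval_var (I : Interp) (n : ℕ) (σ : Ty) : eval I (.name (.var n σ)) σ = I n σ := by
  rw [show eval I (.name (.var n σ)) σ =
    if h : σ = σ then Ty.semCast h (I n σ) else default from rfl, dif_pos rfl]
  rfl

theorem eval_app (I : Interp) {u w : Tm} {υ : Ty} (hw : HasTy w υ) (σ : Ty) :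
    eval I (.app u w) σ = eval I u (.arrow υ σ) (eval I w υ) := by
  rw [show eval I (.app u w) σ = match typeOf w with
    | some τ => eval I u (.arrow τ σ) (eval I w τ)
    | none => default from rfl, hw.typeOf_eq]

theorem eval_lam (I : Interp) (n : ℕ) (σ τ : Ty) (b : Tm) (a : σ.sem) :
    eval I (.lam n σ b) (.arrow σ τ) a = eval (I.update n σ a) b τ := by
  rw [show eval I (.lam n σ b) (.arrow σ τ) = if h : σ = σ then
    fun a => eval (I.update n σ (Ty.semCast h a)) b τ else default from rfl, dif_pos rfl]
  rfl

theorem Interp.update_self (I : Interp) (n : ℕ) (σ : Ty) (v : σ.sem) :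
    I.update n σ v n σ = v := by
  simp [Interp.update, Ty.semCast]

theorem Interp.update_of_ne (I : Interp) {n : ℕ} {σ : Ty} (v : σ.sem) {m : ℕ} {τ : Ty}
    (h : (m, τ) ≠ (n, σ)) : I.update n σ v m τ = I m τ := by
  rw [Interp.update, dif_neg fun h' => h (Prod.ext h'.1 h'.2)]

noncomputable def quoteSub (W : Finset (ℕ × Ty)) (I : Interp) (p : ℕ × Ty) : Tm :=
  if p ∈ W then vr p.1 p.2 else quote p.2 (I p.1 p.2)

noncomputable def hypSet (W : Finset (ℕ × Ty)) (I : Interp) : Finset Tm :=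
  W.image fun p => quote p.2 (I p.1 p.2) ≐[p.2] vr p.1 p.2

theorem isSubstitution_quoteSub (W : Finset (ℕ × Ty)) (I : Interp) :
    IsSubstitution (quoteSub W I) := fun n σ => by
  unfold quoteSub
  split
  · exact hasTy_vr
  · exact hasTy_quote _

theorem isFormulaSet_hypSet (W : Finset (ℕ × Ty)) (I : Interp) : IsFormulaSet (hypSet W I) := by
  intro u hu
  obtain ⟨p, -, rfl⟩ := Finset.mem_image.1 hu
  exact hasTy_eqFml (hasTy_quote _) hasTy_vr

theorem update_quoteSub (W : Finset (ℕ × Ty)) (I : Interp) (n : ℕ) (σ : Ty) (a : σ.sem) :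
    Function.update (quoteSub W I) (n, σ) (quote σ a) =
      quoteSub (W.erase (n, σ)) (I.update n σ a) := by
  funext p
  by_cases hp : p = (n, σ)
  · subst hp
    simp [quoteSub, Interp.update_self]
  · simp [quoteSub, hp, Interp.update_of_ne I a hp]

theorem hypSet_erase_update (W : Finset (ℕ × Ty)) (I : Interp) (n : ℕ) (σ : Ty) (a : σ.sem) :
    hypSet (W.erase (n, σ)) (I.update n σ a) = hypSet (W.erase (n, σ)) I :=
  Finset.image_congr fun p hp => by
    simp only [Interp.update_of_ne I a (Finset.mem_erase.1 hp).1]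

theorem hypSet_insert_update {W : Finset (ℕ × Ty)} {p : ℕ × Ty} (hp : p ∉ W) (I : Interp)
    (a : p.2.sem) :
    insert (quote p.2 a ≐[p.2] vr p.1 p.2) (hypSet W I) =
      hypSet (insert p W) (I.update p.1 p.2 a) := by
  rw [hypSet, hypSet, Finset.image_insert, Interp.update_self]
  congr 1
  refine Finset.image_congr fun q hq => ?_
  have hqp : (q.1, q.2) ≠ (p.1, p.2) := fun h => hp ((show q = p from h) ▸ Finset.mem_coe.1 hq)
  rw [Interp.update_of_ne I a hqp]

theorem eval_imp (I : Interp) :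
    eval I (.name .imp) (.arrow .base (.arrow .base .base)) = fun a b => !a || b :=
  rfl

theorem Ded.eqFml_quote_eval_imp {A : Finset Tm} (hA : IsFormulaSet A) (I : Interp) :
    Ded A (quote _ (eval I (.name .imp) (.arrow .base (.arrow .base .base)))
      ≐[.arrow .base (.arrow .base .base)] .name .imp) := by
  refine eqFml_of_forall hA (hasTy_quote _) (HasTy.name .imp) fun ⟨b₁, b₂, _⟩ => ?_
  change Ded A (equivTm (appQuotes (.arrow .base (.arrow .base .base))
    (eval I (.name .imp) _) (b₁, b₂, PUnit.unit))
    (impTm (quote .base b₁) (quote .base b₂)))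
  have hv : (Ty.arrow .base (.arrow .base .base)).applyTup (eval I (.name .imp) _)
      (b₁, b₂, PUnit.unit) = (!b₁ || b₂) := by
    rw [eval_imp]; rfl
  cases b₁ <;> cases b₂ <;> simp only [Bool.not_false, Bool.not_true, Bool.true_or,
    Bool.false_or] at hv <;> simp only [quote_base_true, quote_base_false]
  · exact equiv_of_ded ((appQuotes_of_applyTup hv).of_empty hA)
      (ded (exfalso (triv hA hasTy_bot) hasTy_bot))
  · exact equiv_of_ded ((appQuotes_of_applyTup hv).of_empty hA)
      (ded (exfalso (triv hA hasTy_bot) hasTy_top))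
  · exact equiv_of_neg ((neg_appQuotes hv).of_empty hA)
      (ded (mp (triv hA (hasTy_imp hasTy_top hasTy_bot))
        (top (hA.insert (hasTy_imp hasTy_top hasTy_bot)))))
  · exact equiv_of_ded ((appQuotes_of_applyTup hv).of_empty hA) (ded (top (hA.insert hasTy_top)))

theorem Ded.eqFml_quote_apply {A : Finset Tm} {υ σ : Ty} {f : (Ty.arrow υ σ).sem} {a : υ.sem}
    {u w : Tm} (hu : HasTy u (.arrow υ σ)) (hw : HasTy w υ)
    (hf : Ded A (quote _ f ≐[.arrow υ σ] u)) (ha : Ded A (quote υ a ≐[υ] w)) :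
    Ded A (quote σ (f a) ≐[σ] .app u w) := by
  have hA := hf.isFormulaSet
  have h₁ := (repP σ).symm (.app (hasTy_quote f) (hasTy_quote a)) (hasTy_quote (f a))
    ((eqFml_quote_app f a).of_empty hA)
  have h₂ := repP _ A _ _ (.appR (.app (eqTm σ) (quote σ (f a))) (.appL .hole (quote υ a))) hA
    (hasTy_quote f) hu (fun _ _ hc => hc) hf h₁
  exact repP υ A _ _ (.appR (.app (eqTm σ) (quote σ (f a))) (.appR u .hole)) hA (hasTy_quote a) hw
    (fun _ _ hc => hc) ha h₂

theorem Ded.eqFml_quote_eval_lam {n : ℕ} {σ τ : Ty} {b : Tm} (hb : HasTy b τ)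
    (ih : ∀ I W, Ded (hypSet W I) (quote τ (eval I b τ) ≐[τ] substAux (quoteSub W I) b))
    (I : Interp) (W : Finset (ℕ × Ty)) :
    Ded (hypSet W I) (quote _ (eval I (.lam n σ b) (.arrow σ τ))
      ≐[.arrow σ τ] substAux (quoteSub W I) (.lam n σ b)) := by
  have hA := isFormulaSet_hypSet W I
  have hρ := isSubstitution_quoteSub W I
  have hL := (HasTy.lam (n := n) (σ := σ) hb).substAux_of_isSubstitution hρ
  refine (andList_intro hA fun v hv => ?_).lamEq (eqFml_arrow_lamEq (hasTy_quote _) hL).symm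
  obtain ⟨a, -, rfl⟩ := List.mem_map.1 hv
  have ihb := ih (I.update n σ a) (W.erase (n, σ))
  rw [hypSet_erase_update, ← update_quoteSub, ← eval_lam] at ihb
  have hβ := lamEq_app_substAux_lam (n := n) hρ hb (hasTy_quote a)
  refine (repP τ).trans (.app (hasTy_quote _) (hasTy_quote a)) (hasTy_quote _)
    ((eqFml_quote_app _ a).of_empty hA) ?_
  exact (ihb.mono (Finset.image_subset_image (Finset.erase_subset _ _)) hA).lamEq
    (hβ.symm.app_right (hasTy_eqFml (hasTy_quote _)
      (hb.substAux_of_isSubstitution (hρ.update (hasTy_quote a)))))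

theorem Ded.eqFml_quote_eval {s : Tm} {σ : Ty} (hs : HasTy s σ) (I : Interp)
    (W : Finset (ℕ × Ty)) :
    Ded (hypSet W I) (quote σ (eval I s σ) ≐[σ] substAux (quoteSub W I) s) := by
  induction hs generalizing I W with
  | name x =>
      have hA := isFormulaSet_hypSet W I
      cases x with
      | var n σ =>
          change Ded _ (quote σ (eval I (.name (.var n σ)) σ) ≐[σ] quoteSub W I (n, σ))
          rw [eval_var]
          by_cases hn : (n, σ) ∈ W
          · rw [quoteSub, if_pos hn]
            exact of_mem hA (Finset.mem_image_of_mem _ hn)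
          · rw [quoteSub, if_neg hn]
            exact eqFml_refl hA (hasTy_quote _)
      | bot =>
          change Ded _ (quote .base false ≐[.base] botTm)
          rw [quote_base_false]
          exact (equiv_of_neg (top hA) (top hA)).lamEq (eqFml_base_lamEq hasTy_bot hasTy_bot).symm
      | imp => exact eqFml_quote_eval_imp hA I
  | app hu hw ihu ihw =>
      rw [eval_app I hw, substAux_app]
      exact eqFml_quote_apply (hu.substAux_of_isSubstitution (isSubstitution_quoteSub W I))
        (hw.substAux_of_isSubstitution (isSubstitution_quoteSub W I)) (ihu I W) (ihw I W)
  | lam hb ih => exact eqFml_quote_eval_lam hb ih I W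

theorem Ded.of_forall_hypSet {s : Tm} (hs : HasTy s .base) (W : Finset (ℕ × Ty))
    (h : ∀ I, Ded (hypSet W I) s) : Ded ∅ s := by
  induction W using Finset.induction_on with
  | empty => simpa [hypSet] using h fun _ _ => default
  | insert p W hp ih =>
      refine ih fun I => orList_elim (enumTm p.2 _ (vr p.1 p.2) (isFormulaSet_hypSet W I) hasTy_vr)
        (fun u hu => ?_) hs
      obtain ⟨a, -, rfl⟩ := List.mem_map.1 hu
      rw [hypSet_insert_update hp]
      exact h _

theorem Ded.of_validFml {s : Tm} (hs : HasTy s .base) (hval : ValidFml s) : Ded ∅ s := by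
  refine of_forall_hypSet hs (fv s) fun I => ?_
  have h := eqFml_quote_eval hs I (fv s)
  rw [show eval I s .base = true from hval I, quote_base_true] at h
  have hid : LamEq (substAux (quoteSub (fv s) I) s) s :=
    lamEq_substAux_of_eqOn hs fun p hp => if_pos hp
  exact ((h.lamEq (eqFml_base_lamEq hasTy_top (hid.symm.hasTy hs))).equiv_mp
    (top h.isFormulaSet)).lamEq hid

/-- `Enum_σ` and `Rep_σ` hold for all types; consequently
(Deductive Completeness) every valid formula is deducible. -/
theorem deductive_completeness :
    (∀ σ : Ty, EnumP σ ∧ RepP σ) ∧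
    (∀ s : Tm, HasTy s .base → ValidFml s → Ded ∅ s) :=
  ⟨fun σ => ⟨fun n => enumTm σ ∅ (vr n σ) isFormulaSet_empty hasTy_vr, repP σ⟩,
    fun _ => Ded.of_validFml⟩

end PTT
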